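/- arXiv:math/0203262 — 4 statements merged into one kernel-verified Lean document; each statement's English description precedes it below -/
import Mathlib

section
/- For every positive integer m there exists a function g from {0,1}^{m^2} to {0,1,...,m} such that (i) flipping any single coordinate changes the value of g by at most 1, and (ii) for every y in {0,1,...,m}, the probability under the uniform measure on {0,1}^{m^2} that g(x)=y is at most c/m for some universal constant c>0. -/
/-!
Take `g x = zigzag m |x|`, the triangle wave of period `2m` and height `m` applied to the Hamming
weight. A coordinate flip moves `|x|` by one, hence `g` by at most one, and `{g = y}` lies in two
residue classes of `|x|` modulo `2m`. For a unimodal sequence `a` with maximum `M`, comparing each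
progression of step `q` with its shifts by `s < q` gives `q · ∑ₖ a (r + q k) ≤ ∑ a + q M`. With
`a = (m² choose ·)` and `m² · M² ≤ 4 ^ m²` each residue class has probability at most
`1 / (2m) + 1 / m`, so `c = 3` works.
-/

open Finset

theorem sum_range_mul_eq_sum_sum {M : Type*} [AddCommMonoid M] (f : ℕ → M) (q L : ℕ) :
    ∑ t ∈ range (q * L), f t = ∑ k ∈ range L, ∑ s ∈ range q, f (q * k + s) := by
  induction L with
  | zero => simp
  | succ L ih => rw [mul_add_one, sum_range_add, ih, sum_range_succ]

section Unimodal

variable {f : ℕ → ℕ} {p : ℕ}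

theorem apply_le_apply_peak (hmono : MonotoneOn f (Set.Iic p)) (hanti : AntitoneOn f (Set.Ici p))
    (j : ℕ) : f j ≤ f p := by
  rcases le_total j p with hj | hj
  · exact hmono hj Set.self_mem_Iic hj
  · exact hanti Set.self_mem_Ici hj hj

/-- Pair `f (r + q k)` with `f (r + q k + s)` before the peak and with `f (r + q (k - 1) + s)`
after it: only the term at the crossing is left unmatched. -/
theorem sum_progression_le_sum_shift (hmono : MonotoneOn f (Set.Iic p))
    (hanti : AntitoneOn f (Set.Ici p)) {q s : ℕ} (hs : s ≤ q) (L r : ℕ) :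
    ∑ k ∈ range L, f (r + q * k) ≤ ∑ k ∈ range L, f (r + q * k + s) + f p := by
  induction L generalizing r with
  | zero => simp
  | succ L ih =>
    have hshift : ∀ k, r + q * (k + 1) = r + q + q * k := fun k => by ring
    rw [sum_range_succ' (fun k => f (r + q * k))]
    simp only [hshift, mul_zero, add_zero]
    rcases le_or_gt (r + s) p with hbefore | hafter
    · have hr : f r ≤ f (r + s) := hmono (by simp; omega) hbefore (Nat.le_add_right r s)
      have hrest := ih (r + q)
      rw [sum_range_succ' (fun k => f (r + q * k + s))]
      simp only [hshift, mul_zero, add_zero]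
      omega
    · have hpaired :
          ∑ k ∈ range L, f (r + q + q * k) ≤ ∑ k ∈ range L, f (r + q * k + s) :=
        sum_le_sum fun k _ => hanti (by simp; omega) (by simp; omega) (by omega)
      have hr := apply_le_apply_peak hmono hanti r
      rw [sum_range_succ (fun k => f (r + q * k + s))]
      omega

theorem mul_sum_progression_le (hmono : MonotoneOn f (Set.Iic p))
    (hanti : AntitoneOn f (Set.Ici p)) (q L r : ℕ) :
    q * ∑ k ∈ range L, f (r + q * k) ≤ ∑ t ∈ range (q * L), f (r + t) + q * f p := by
  calc q * ∑ k ∈ range L, f (r + q * k)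
      = ∑ s ∈ range q, ∑ k ∈ range L, f (r + q * k) := by
        rw [sum_const, card_range, smul_eq_mul]
    _ ≤ ∑ s ∈ range q, (∑ k ∈ range L, f (r + q * k + s) + f p) :=
        sum_le_sum fun s hs => sum_progression_le_sum_shift hmono hanti (mem_range.1 hs).le L r
    _ = ∑ t ∈ range (q * L), f (r + t) + q * f p := by
        rw [sum_range_mul_eq_sum_sum, sum_add_distrib, sum_comm, sum_const, card_range, smul_eq_mul]
        simp only [add_assoc]

end Unimodal

theorem Nat.choose_monotoneOn (n : ℕ) : MonotoneOn n.choose (Set.Iic (n / 2)) :=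
  monotoneOn_of_le_succ Set.ordConnected_Iic fun _ _ _ hj =>
    Nat.choose_le_succ_of_lt_half_left (Order.succ_le_iff.mp hj)

theorem Nat.choose_antitoneOn (n : ℕ) : AntitoneOn n.choose (Set.Ici (n / 2)) := by
  refine antitoneOn_of_succ_le Set.ordConnected_Ici fun j _ hj _ => ?_
  have h := Nat.choose_succ_right_eq n j
  have hj : n - j ≤ j + 1 := by simp at hj; omega
  exact Nat.le_of_mul_le_mul_right (h ▸ Nat.mul_le_mul_left _ hj) j.succ_pos

theorem Nat.sum_range_choose_le (n K : ℕ) : ∑ j ∈ range K, n.choose j ≤ 2 ^ n :=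
  Nat.sum_range_choose n ▸ sum_le_sum_of_ne_zero fun j _ hj =>
    mem_range.2 (Nat.lt_succ_of_le (by_contra fun h => hj (Nat.choose_eq_zero_of_lt (by omega))))

theorem Nat.sum_range_choose_add_le (n r N : ℕ) : ∑ t ∈ range N, n.choose (r + t) ≤ 2 ^ n :=
  calc ∑ t ∈ range N, n.choose (r + t) ≤ ∑ j ∈ range (r + N), n.choose j := by
        rw [sum_range_add]; exact Nat.le_add_left _ _
    _ ≤ 2 ^ n := sum_range_choose_le n _

theorem Nat.two_mul_add_one_mul_centralBinom_sq_le (k : ℕ) :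
    (2 * k + 1) * k.centralBinom ^ 2 ≤ 4 ^ (2 * k) := by
  induction k with
  | zero => simp
  | succ k ih =>
    have hgrowth : (2 * k + 1) * (2 * k + 3) ≤ (k + 1) ^ 2 * 4 := by nlinarith
    refine Nat.le_of_mul_le_mul_left ?_ (by positivity : 0 < (k + 1) ^ 2)
    calc (k + 1) ^ 2 * ((2 * (k + 1) + 1) * (k + 1).centralBinom ^ 2)
        = (2 * k + 3) * ((k + 1) * (k + 1).centralBinom) ^ 2 := by ring
      _ = (2 * k + 1) * (2 * k + 3) * 4 * ((2 * k + 1) * k.centralBinom ^ 2) := by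
          rw [succ_mul_centralBinom_succ]; ring
      _ ≤ (k + 1) ^ 2 * 4 * 4 * 4 ^ (2 * k) := by gcongr
      _ = (k + 1) ^ 2 * 4 ^ (2 * (k + 1)) := by ring

theorem Nat.mul_choose_half_sq_le (n : ℕ) : n * n.choose (n / 2) ^ 2 ≤ 4 ^ n := by
  obtain ⟨k, rfl | rfl⟩ := Nat.even_or_odd' n
  · rw [Nat.mul_div_cancel_left k two_pos, ← centralBinom_eq_two_mul_choose]
    exact (Nat.mul_le_mul_right _ (by omega)).trans (two_mul_add_one_mul_centralBinom_sq_le k)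
  · have hsucc : (k + 1).centralBinom = 2 * (2 * k + 1).choose k := by
      rw [centralBinom_eq_two_mul_choose, mul_add_one, choose_succ_succ, choose_symm_half]; ring
    have h := two_mul_add_one_mul_centralBinom_sq_le (k + 1)
    rw [hsucc] at h
    rw [show (2 * k + 1) / 2 = k by omega]
    refine Nat.le_of_mul_le_mul_right ?_ (by norm_num : 0 < 4)
    calc (2 * k + 1) * (2 * k + 1).choose k ^ 2 * 4 ≤ 4 ^ (2 * (k + 1)) := by nlinarith
      _ = 4 ^ (2 * k + 1) * 4 := by ring

theorem Nat.mul_choose_sq_half_le (m : ℕ) : m * (m ^ 2).choose (m ^ 2 / 2) ≤ 2 ^ m ^ 2 := by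
  refine (Nat.pow_le_pow_iff_left two_ne_zero).mp ?_
  calc (m * (m ^ 2).choose (m ^ 2 / 2)) ^ 2 = m ^ 2 * (m ^ 2).choose (m ^ 2 / 2) ^ 2 := by ring
    _ ≤ 4 ^ m ^ 2 := Nat.mul_choose_half_sq_le _
    _ = (2 ^ m ^ 2) ^ 2 := by rw [← pow_mul, mul_comm, pow_mul]; norm_num

section HammingWeight

variable {ι : Type*} [Fintype ι] [DecidableEq ι]

def hammingWeight (x : ι → Bool) : ℕ := #{i | x i}

theorem card_hammingWeight_eq (j : ℕ) :
    #{x : ι → Bool | hammingWeight x = j} = (Fintype.card ι).choose j := by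
  rw [← card_univ, ← card_powersetCard]
  refine card_nbij' (fun x => univ.filter (x ·)) (fun s i => i ∈ s) ?_ ?_ ?_ ?_
  · intro x hx
    simp only [coe_filter, mem_univ, true_and, Set.mem_ofPred_eq, mem_coe,
      mem_powersetCard] at hx ⊢
    simpa [hammingWeight] using hx
  · intro s hs
    simp only [coe_filter, mem_univ, true_and, Set.mem_ofPred_eq, mem_coe,
      mem_powersetCard] at hs ⊢
    simpa [hammingWeight] using hs
  · intro x _
    simp
  · intro s _
    ext
    simp

theorem hammingWeight_update_not (x : ι → Bool) (i : ι) :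
    hammingWeight (Function.update x i (!x i)) + 1 = hammingWeight x ∨
      hammingWeight (Function.update x i (!x i)) = hammingWeight x + 1 := by
  cases hx : x i
  · right
    have : univ.filter (Function.update x i true ·) = insert i (univ.filter (x ·)) := by
      ext j; by_cases hj : j = i <;> simp [hj, hx]
    simp only [hammingWeight, Bool.not_false, this]
    exact card_insert_of_notMem (by simp [hx])
  · left
    have : univ.filter (Function.update x i false ·) = (univ.filter (x ·)).erase i := by
      ext j; by_cases hj : j = i <;> simp [hj, hx]
    simp only [hammingWeight, Bool.not_true, this]
    exact card_erase_add_one (by simp [hx])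

theorem card_hammingWeight_mod_le (q r : ℕ) :
    #{x : ι → Bool | hammingWeight x % q = r} ≤
      ∑ k ∈ range (Fintype.card ι + 1), (Fintype.card ι).choose (r + q * k) := by
  rw [card_eq_sum_card_fiberwise (f := fun x => hammingWeight x / q)
    (t := range (Fintype.card ι + 1))]
  · refine sum_le_sum fun k _ => (card_le_card fun x hx => ?_).trans (card_hammingWeight_eq _).le
    simp only [mem_filter, mem_univ, true_and] at hx ⊢
    rw [← hx.1, ← hx.2, Nat.mod_add_div]
  · intro x _
    exact mem_range.2 (Nat.lt_succ_of_le ((Nat.div_le_self _ _).trans (card_filter_le _ _)))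

theorem mul_card_hammingWeight_mod_le (q r : ℕ) :
    q * #{x : ι → Bool | hammingWeight x % q = r} ≤
      2 ^ Fintype.card ι + q * (Fintype.card ι).choose (Fintype.card ι / 2) := by
  set n := Fintype.card ι
  calc q * #{x : ι → Bool | hammingWeight x % q = r}
      ≤ q * ∑ k ∈ range (n + 1), n.choose (r + q * k) :=
        Nat.mul_le_mul_left q (card_hammingWeight_mod_le q r)
    _ ≤ ∑ t ∈ range (q * (n + 1)), n.choose (r + t) + q * n.choose (n / 2) :=
        mul_sum_progression_le (Nat.choose_monotoneOn n) (Nat.choose_antitoneOn n) q _ r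
    _ ≤ 2 ^ n + q * n.choose (n / 2) := by gcongr; exact Nat.sum_range_choose_add_le n r _

end HammingWeight

def zigzag (m j : ℕ) : ℕ := min (j % (2 * m)) (2 * m - j % (2 * m))

theorem zigzag_le (m j : ℕ) : zigzag m j ≤ m := by
  unfold zigzag; omega

theorem abs_zigzag_succ_sub_le (m t : ℕ) : |(zigzag m (t + 1) : ℤ) - zigzag m t| ≤ 1 := by
  rcases Nat.eq_zero_or_pos m with rfl | hm
  · simp [zigzag]
  have hmod := Nat.mod_lt t (by omega : 0 < 2 * m)
  have hsucc : (t + 1) % (2 * m) = if t % (2 * m) + 1 = 2 * m then 0 else t % (2 * m) + 1 := by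
    rw [Nat.add_mod, Nat.mod_eq_of_lt (by omega : 1 < 2 * m)]
    split_ifs with h
    · rw [h, Nat.mod_self]
    · exact Nat.mod_eq_of_lt (by omega)
  unfold zigzag
  rw [hsucc, abs_le]
  split_ifs <;> omega

theorem mod_eq_of_zigzag_eq {m j y : ℕ} (hm : 0 < m) (h : zigzag m j = y) :
    j % (2 * m) = y ∨ j % (2 * m) = 2 * m - y := by
  have := Nat.mod_lt j (by omega : 0 < 2 * m)
  unfold zigzag at h; omega

theorem mul_card_zigzag_hammingWeight_eq_le {m : ℕ} (hm : 0 < m) (y : ℕ) :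
    m * #{x : Fin (m ^ 2) → Bool | zigzag m (hammingWeight x) = y} ≤ 3 * 2 ^ m ^ 2 := by
  have hsplit : #{x : Fin (m ^ 2) → Bool | zigzag m (hammingWeight x) = y} ≤
      #{x : Fin (m ^ 2) → Bool | hammingWeight x % (2 * m) = y} +
        #{x : Fin (m ^ 2) → Bool | hammingWeight x % (2 * m) = 2 * m - y} := by
    refine (card_le_card fun x hx => ?_).trans (card_union_le _ _)
    simp only [mem_filter, mem_union, mem_univ, true_and] at hx ⊢
    exact mod_eq_of_zigzag_eq hm hx
  have h₁ := mul_card_hammingWeight_mod_le (ι := Fin (m ^ 2)) (2 * m) y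
  have h₂ := mul_card_hammingWeight_mod_le (ι := Fin (m ^ 2)) (2 * m) (2 * m - y)
  have hmid := Nat.mul_choose_sq_half_le m
  simp only [Fintype.card_fin] at h₁ h₂
  calc m * #{x : Fin (m ^ 2) → Bool | zigzag m (hammingWeight x) = y}
      ≤ m * #{x : Fin (m ^ 2) → Bool | hammingWeight x % (2 * m) = y} +
          m * #{x : Fin (m ^ 2) → Bool | hammingWeight x % (2 * m) = 2 * m - y} := by
        rw [← mul_add]; exact Nat.mul_le_mul_left m hsplit
    _ ≤ 3 * 2 ^ m ^ 2 := by linarith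

/-- There is a universal constant `c > 0` such that for every positive
integer `m` there is a function `g : {0,1}^{m²} → {0,…,m}` whose value changes by at
most 1 under any single coordinate flip, and such that each level set `{g = y}` has
uniform probability at most `c/m`. -/
theorem stmt0 :
    ∃ c : ℝ, 0 < c ∧ ∀ m : ℕ, 0 < m →
      ∃ g : (Fin (m ^ 2) → Bool) → ℕ,
        (∀ x, g x ≤ m) ∧
        (∀ x (j : Fin (m ^ 2)),
          |(g (Function.update x j (!x j)) : ℤ) - (g x : ℤ)| ≤ 1) ∧
        (∀ y : ℕ, y ≤ m →
          ((Finset.univ.filter fun x : Fin (m ^ 2) → Bool => g x = y).card : ℝ)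
              / 2 ^ (m ^ 2) ≤ c / m) := by
  refine ⟨3, by norm_num, fun m hm => ⟨fun x => zigzag m (hammingWeight x),
    fun x => zigzag_le m _, fun x j => ?_, fun y _ => ?_⟩⟩
  · dsimp only
    rcases hammingWeight_update_not x j with h | h
    · rw [← h, abs_sub_comm]; exact abs_zigzag_succ_sub_le m _
    · rw [h]; exact abs_zigzag_succ_sub_le m _
  · rw [div_le_div_iff₀ (by positivity) (by exact_mod_cast hm), mul_comm]
    exact_mod_cast mul_card_zigzag_hammingWeight_eq_le hm y
end

section
/- For f: {0,1}^J → ℝ with J finite, Var(f) ≤ 3 Σ_{j∈J} ∫_0^1 ‖f_j‖_{1+p^2}^2 dp, where f_j := (f - f∘σ_j)/2 and ‖·‖_q denotes the L^q norm with respect to the uniform measure. -/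
open Finset

/-- Expectation with respect to the uniform measure on `{0,1}^J`. -/
noncomputable def hcExp {J : Type*} [Fintype J] [DecidableEq J] (f : (J → Bool) → ℝ) : ℝ :=
  (∑ x : J → Bool, f x) / 2 ^ Fintype.card J

/-- The Walsh function `u_S(ω) = (-1)^{Σ_{s∈S} ω_s}`. -/
def walsh {J : Type*} (S : Finset J) (x : J → Bool) : ℝ :=
  (-1 : ℝ) ^ (S.filter fun s => x s = true).card

/-- The Fourier-Walsh coefficient `\hat f(S) = E[f ⬝ u_S]`. -/
noncomputable def fcoef {J : Type*} [Fintype J] [DecidableEq J] (f : (J → Bool) → ℝ) (S : Finset J) : ℝ :=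
  hcExp fun x => f x * walsh S x

/-- The discrete derivative `ρ_j f = (f - f∘σ_j)/2`, where `σ_j` flips coordinate `j`. -/
noncomputable def rhoD {J : Type*} [DecidableEq J] (j : J) (f : (J → Bool) → ℝ) :
    (J → Bool) → ℝ :=
  fun x => (f x - f (Function.update x j (!x j))) / 2

/-- The `L^q` norm with respect to the uniform measure on `{0,1}^J`. -/
noncomputable def lqNorm {J : Type*} [Fintype J] [DecidableEq J] (q : ℝ)
    (f : (J → Bool) → ℝ) : ℝ :=
  (hcExp fun x => |f x| ^ q) ^ (1 / q)

/-- The variance with respect to the uniform measure on `{0,1}^J`. -/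
noncomputable def hcVar {J : Type*} [Fintype J] [DecidableEq J]
    (f : (J → Bool) → ℝ) : ℝ :=
  hcExp fun x => (f x - hcExp f) ^ 2


/-!
In the Walsh basis, `Var f = ∑_{S ≠ ∅} f̂(S)²` and `ρ_j f` keeps exactly the coefficients with
`j ∈ S`. Hence `∫₀¹ ∑_{S ∋ j} p^{2|S|} f̂(S)² dp = ∑_{S ∋ j} f̂(S)² / (2|S| + 1)`, and summing over
`j` gives `∑_S |S| f̂(S)² / (2|S| + 1) ≥ Var f / 3`. It remains to bound
`∑_{S ∋ j} p^{2|S|} f̂(S)² = ‖T_p ρ_j f‖₂²` by `‖ρ_j f‖²_{1+p²}`, which is the Bonami–Beckner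
inequality. It is proved one coordinate at a time: `f - ρ_j f ± ρ_j f` are `f` and `f ∘ σ_j`,
so the two-point inequality `(a² + θ b²)^{(1+θ)/2} ≤ (|a + b|^{1+θ} + |a - b|^{1+θ}) / 2`
together with the reverse Minkowski inequality in `L^{(1+θ)/2}` gives
`‖f - ρ_j f‖²_{1+θ} + θ ‖ρ_j f‖²_{1+θ} ≤ ‖f‖²_{1+θ}`.
-/

section Walsh

variable {J : Type*}

theorem walsh_eq_prod (S : Finset J) (x : J → Bool) :
    walsh S x = ∏ i ∈ S, if x i then (-1 : ℝ) else 1 := by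
  rw [walsh, prod_ite, prod_const, prod_const_one, mul_one]

theorem abs_walsh (S : Finset J) (x : J → Bool) : |walsh S x| = 1 := by
  rw [walsh, abs_pow, abs_neg, abs_one, one_pow]

theorem sum_walsh_mul_walsh [Fintype J] (x y : J → Bool) :
    ∑ S : Finset J, walsh S x * walsh S y = if x = y then (2 : ℝ) ^ Fintype.card J else 0 := by
  have hfactor : ∀ i, 1 + (if x i then (-1 : ℝ) else 1) * (if y i then -1 else 1) =
      if x i = y i then 2 else 0 := by
    intro i
    cases x i <;> cases y i <;> norm_num
  calc ∑ S : Finset J, walsh S x * walsh S y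
      = ∏ i, (1 + (if x i then (-1 : ℝ) else 1) * (if y i then -1 else 1)) := by
        rw [prod_one_add, powerset_univ]
        simp only [walsh_eq_prod, prod_mul_distrib]
    _ = if x = y then (2 : ℝ) ^ Fintype.card J else 0 := by
        simp only [hfactor, prod_ite_zero, funext_iff, prod_const, card_univ, mem_univ,
          true_imp_iff]

variable [DecidableEq J]

theorem walsh_insert {j : J} {S : Finset J} (hj : j ∉ S) (x : J → Bool) :
    walsh (insert j S) x = walsh {j} x * walsh S x := by
  rw [walsh_eq_prod, walsh_eq_prod, walsh_eq_prod, prod_insert hj, prod_singleton]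

def flipAt (j : J) (x : J → Bool) : J → Bool :=
  Function.update x j (!x j)

theorem flipAt_involutive (j : J) : Function.Involutive (flipAt j) := by
  intro x
  simp [flipAt]

theorem walsh_flipAt (S : Finset J) (j : J) (x : J → Bool) :
    walsh S (flipAt j x) = (if j ∈ S then -1 else 1) * walsh S x := by
  have hsign : ∀ i, (if flipAt j x i then (-1 : ℝ) else 1) =
      Function.update (fun i => if x i then (-1 : ℝ) else 1) j (-if x j then -1 else 1) i := by
    intro i
    rcases eq_or_ne i j with rfl | hi
    · cases h : x i <;> simp [flipAt, h]
    · simp [flipAt, hi]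
  simp only [walsh_eq_prod, hsign]
  by_cases hj : j ∈ S
  · rw [if_pos hj, prod_update_of_mem hj, ← mul_prod_erase S _ hj, sdiff_singleton_eq_erase]
    ring
  · rw [if_neg hj, prod_update_of_notMem hj, one_mul]

end Walsh

section Expectation

variable {J : Type*} [Fintype J] [DecidableEq J]

theorem hcExp_eq_sum_mul (f : (J → Bool) → ℝ) :
    hcExp f = ∑ x, ((2 : ℝ) ^ Fintype.card J)⁻¹ * f x := by
  rw [hcExp, div_eq_inv_mul, mul_sum]

theorem hcExp_add (f g : (J → Bool) → ℝ) :
    hcExp (fun x => f x + g x) = hcExp f + hcExp g := by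
  simp only [hcExp, sum_add_distrib, add_div]

theorem hcExp_sub (f g : (J → Bool) → ℝ) :
    hcExp (fun x => f x - g x) = hcExp f - hcExp g := by
  simp only [hcExp, sum_sub_distrib, sub_div]

theorem hcExp_const_mul (c : ℝ) (f : (J → Bool) → ℝ) :
    hcExp (fun x => c * f x) = c * hcExp f := by
  simp only [hcExp, ← mul_sum, mul_div_assoc]

theorem hcExp_sum {ι : Type*} (s : Finset ι) (f : ι → (J → Bool) → ℝ) :
    hcExp (fun x => ∑ i ∈ s, f i x) = ∑ i ∈ s, hcExp (f i) := by
  simp only [hcExp, sum_div]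
  exact sum_comm

theorem hcExp_const (c : ℝ) : hcExp (fun _ : J → Bool => c) = c := by
  simp [hcExp_eq_sum_mul]

theorem hcExp_mono {f g : (J → Bool) → ℝ} (h : ∀ x, f x ≤ g x) : hcExp f ≤ hcExp g :=
  div_le_div_of_nonneg_right (sum_le_sum fun x _ => h x) (by positivity)

theorem hcExp_nonneg {f : (J → Bool) → ℝ} (h : ∀ x, 0 ≤ f x) : 0 ≤ hcExp f :=
  div_nonneg (sum_nonneg fun x _ => h x) (by positivity)

theorem hcExp_comp_flipAt (j : J) (f : (J → Bool) → ℝ) :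
    hcExp (fun x => f (flipAt j x)) = hcExp f := by
  rw [hcExp, hcExp, (flipAt_involutive j).bijective.sum_comp f]

end Expectation

section Fourier

variable {J : Type*} [Fintype J] [DecidableEq J]

theorem sum_fcoef_mul_walsh (f : (J → Bool) → ℝ) (x : J → Bool) :
    ∑ S, fcoef f S * walsh S x = f x := by
  calc ∑ S, fcoef f S * walsh S x
      = hcExp (fun y => f y * ∑ S : Finset J, walsh S y * walsh S x) := by
        simp only [mul_sum, hcExp_sum, fcoef, mul_comm _ (walsh _ x), ← hcExp_const_mul,
          mul_left_comm]
    _ = f x := by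
        simp [sum_walsh_mul_walsh, hcExp]

theorem hcExp_sq_eq_sum_fcoef_sq (f : (J → Bool) → ℝ) :
    hcExp (fun x => f x ^ 2) = ∑ S, fcoef f S ^ 2 := by
  calc hcExp (fun x => f x ^ 2)
      = hcExp (fun x => ∑ S, fcoef f S * (f x * walsh S x)) := by
        simp only [mul_left_comm (fcoef f _), ← mul_sum, sum_fcoef_mul_walsh, sq]
    _ = ∑ S, fcoef f S ^ 2 := by
        simp only [hcExp_sum, hcExp_const_mul, sq]
        rfl

theorem fcoef_empty (f : (J → Bool) → ℝ) : fcoef f ∅ = hcExp f := by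
  simp [fcoef, walsh]

theorem hcVar_eq_sum_fcoef_sq (f : (J → Bool) → ℝ) :
    hcVar f = ∑ S ∈ univ.erase ∅, fcoef f S ^ 2 := by
  have hexpand : ∀ x, (f x - hcExp f) ^ 2 = f x ^ 2 - (2 * hcExp f * f x - hcExp f ^ 2) := by
    intro x
    ring
  rw [sum_erase_eq_sub (mem_univ _), ← hcExp_sq_eq_sum_fcoef_sq, fcoef_empty, hcVar]
  simp only [hexpand, hcExp_sub, hcExp_const_mul, hcExp_const]
  ring

theorem fcoef_sub (f g : (J → Bool) → ℝ) (S : Finset J) :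
    fcoef (fun x => f x - g x) S = fcoef f S - fcoef g S := by
  simp only [fcoef, sub_mul, hcExp_sub]

theorem fcoef_rhoD (j : J) (f : (J → Bool) → ℝ) (S : Finset J) :
    fcoef (rhoD j f) S = if j ∈ S then fcoef f S else 0 := by
  have hflip : hcExp (fun x => f (flipAt j x) * walsh S x) =
      (if j ∈ S then -1 else 1) * fcoef f S := by
    rw [← hcExp_comp_flipAt j]
    simp only [flipAt_involutive j _, walsh_flipAt, mul_left_comm (f _), hcExp_const_mul, fcoef]
  have hρ : (fun x => rhoD j f x * walsh S x) =
      fun x => 2⁻¹ * (f x * walsh S x - f (flipAt j x) * walsh S x) := by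
    funext x
    simp only [rhoD, flipAt]
    ring
  rw [fcoef, hρ, hcExp_const_mul, hcExp_sub, hflip, ← fcoef]
  split_ifs <;> ring

theorem fcoef_walsh_singleton_mul {j : J} {S : Finset J} (hj : j ∉ S) (g : (J → Bool) → ℝ) :
    fcoef (fun x => walsh {j} x * g x) S = fcoef g (insert j S) := by
  simp only [fcoef, walsh_insert hj]
  congr 1
  funext x
  ring

end Fourier

theorem sq_rpow_div_two (x q : ℝ) : (x ^ 2) ^ (q / 2) = |x| ^ q := by
  rw [← sq_abs, ← Real.rpow_natCast, ← Real.rpow_mul (abs_nonneg x)]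
  ring_nf

theorem hasDerivAt_one_add_rpow (s : ℝ) {y : ℝ} (hy : -1 < y) :
    HasDerivAt (fun z => (1 + z) ^ s) (s * (1 + y) ^ (s - 1)) y := by
  simpa using ((hasDerivAt_id y).const_add 1).rpow_const (p := s)
    (Or.inl (ne_of_gt (by simp only [id]; linarith)))

theorem hasDerivAt_one_sub_rpow (s : ℝ) {y : ℝ} (hy : y < 1) :
    HasDerivAt (fun z => (1 - z) ^ s) (-(s * (1 - y) ^ (s - 1))) y := by
  simpa using ((hasDerivAt_id y).const_sub 1).rpow_const (p := s)
    (Or.inl (ne_of_gt (by simp only [id]; linarith)))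

theorem two_le_one_add_rpow_add_one_sub_rpow {t x : ℝ} (ht : t ≤ 0) (hx : |x| < 1) :
    2 ≤ (1 + x) ^ t + (1 - x) ^ t := by
  obtain ⟨hx₁, hx₂⟩ := abs_lt.mp hx
  have hpos₁ : 0 < (1 + x) ^ t := Real.rpow_pos_of_pos (by linarith) t
  have hpos₂ : 0 < (1 - x) ^ t := Real.rpow_pos_of_pos (by linarith) t
  have hprod : 1 ≤ (1 + x) ^ t * (1 - x) ^ t := by
    rw [← Real.mul_rpow (by linarith) (by linarith)]
    exact Real.one_le_rpow_of_pos_of_le_one_of_nonpos (by nlinarith) (by nlinarith [sq_nonneg x]) ht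
  nlinarith [sq_nonneg ((1 + x) ^ t - (1 - x) ^ t)]

theorem two_mul_mul_le_one_add_rpow_sub_one_sub_rpow {s x : ℝ} (hs₀ : 0 ≤ s) (hs₁ : s ≤ 1)
    (hx₀ : 0 ≤ x) (hx₁ : x ≤ 1) : 2 * s * x ≤ (1 + x) ^ s - (1 - x) ^ s := by
  let G : ℝ → ℝ := fun y => (1 + y) ^ s - (1 - y) ^ s - 2 * s * y
  have hmono : MonotoneOn G (Set.Icc 0 1) := by
    refine monotoneOn_of_hasDerivWithinAt_nonneg (convex_Icc 0 1)
      (f' := fun y => s * ((1 + y) ^ (s - 1) + (1 - y) ^ (s - 1) - 2)) ?_ ?_ ?_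
    · exact ((((continuous_const.add continuous_id).rpow_const fun _ => Or.inr hs₀).sub
        ((continuous_const.sub continuous_id).rpow_const fun _ => Or.inr hs₀)).sub
        (continuous_const.mul continuous_id)).continuousOn
    · rw [interior_Icc]
      intro y hy
      have hderiv := ((hasDerivAt_one_add_rpow s (by linarith [hy.1])).sub
        (hasDerivAt_one_sub_rpow s hy.2)).sub ((hasDerivAt_id y).const_mul (2 * s))
      exact (hderiv.congr_deriv (by ring)).hasDerivWithinAt
    · rw [interior_Icc]
      intro y hy
      have := two_le_one_add_rpow_add_one_sub_rpow (t := s - 1) (by linarith)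
        (abs_lt.mpr ⟨by linarith [hy.1], hy.2⟩)
      exact mul_nonneg hs₀ (by linarith)
  have := hmono ⟨le_rfl, zero_le_one⟩ ⟨hx₀, hx₁⟩ hx₀
  simp only [G] at this
  norm_num at this
  linarith

theorem two_add_mul_sq_le_one_add_rpow_add_one_sub_rpow {θ x : ℝ} (hθ₀ : 0 ≤ θ) (hθ₁ : θ ≤ 1)
    (hx₀ : 0 ≤ x) (hx₁ : x ≤ 1) :
    2 + (1 + θ) * θ * x ^ 2 ≤ (1 + x) ^ (1 + θ) + (1 - x) ^ (1 + θ) := by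
  let F : ℝ → ℝ := fun y => (1 + y) ^ (1 + θ) + (1 - y) ^ (1 + θ) - (1 + θ) * θ * y ^ 2
  have hmono : MonotoneOn F (Set.Icc 0 1) := by
    refine monotoneOn_of_hasDerivWithinAt_nonneg (convex_Icc 0 1)
      (f' := fun y => (1 + θ) * ((1 + y) ^ θ - (1 - y) ^ θ - 2 * θ * y)) ?_ ?_ ?_
    · have hq : (0 : ℝ) ≤ 1 + θ := by linarith
      exact ((((continuous_const.add continuous_id).rpow_const fun _ => Or.inr hq).add
        ((continuous_const.sub continuous_id).rpow_const fun _ => Or.inr hq)).sub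
        (continuous_const.mul (continuous_pow 2))).continuousOn
    · rw [interior_Icc]
      intro y hy
      have hderiv := ((hasDerivAt_one_add_rpow (1 + θ) (by linarith [hy.1])).add
        (hasDerivAt_one_sub_rpow (1 + θ) hy.2)).sub
        ((hasDerivAt_pow 2 y).const_mul ((1 + θ) * θ))
      exact (hderiv.congr_deriv (by simp; ring)).hasDerivWithinAt
    · rw [interior_Icc]
      intro y hy
      have := two_mul_mul_le_one_add_rpow_sub_one_sub_rpow hθ₀ hθ₁ hy.1.le hy.2.le
      exact mul_nonneg (by linarith) (by linarith)
  have := hmono ⟨le_rfl, zero_le_one⟩ ⟨hx₀, hx₁⟩ hx₀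
  simp only [F] at this
  norm_num at this
  linarith

theorem one_add_mul_sq_rpow_le {θ x : ℝ} (hθ₀ : 0 ≤ θ) (hθ₁ : θ ≤ 1) (hx : |x| ≤ 1) :
    (1 + θ * x ^ 2) ^ ((1 + θ) / 2) ≤ ((1 + x) ^ (1 + θ) + (1 - x) ^ (1 + θ)) / 2 := by
  have hnonneg : ∀ y, 0 ≤ y → y ≤ 1 →
      (1 + θ * y ^ 2) ^ ((1 + θ) / 2) ≤ ((1 + y) ^ (1 + θ) + (1 - y) ^ (1 + θ)) / 2 := by
    intro y hy₀ hy₁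
    have hbernoulli := rpow_one_add_le_one_add_mul_self (s := θ * y ^ 2) (by nlinarith)
      (p := (1 + θ) / 2) (by linarith) (by linarith)
    have := two_add_mul_sq_le_one_add_rpow_add_one_sub_rpow hθ₀ hθ₁ hy₀ hy₁
    linarith
  rcases le_total 0 x with hx₀ | hx₀
  · exact hnonneg x hx₀ (abs_le.mp hx).2
  · have := hnonneg (-x) (by linarith) (by linarith [(abs_le.mp hx).1])
    rwa [neg_sq, ← sub_eq_add_neg, sub_neg_eq_add, add_comm ((1 - x) ^ _)] at this

theorem two_point_inequality_of_abs_le {θ a b : ℝ} (hθ₀ : 0 ≤ θ) (hθ₁ : θ ≤ 1)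
    (hba : |b| ≤ |a|) :
    (a ^ 2 + θ * b ^ 2) ^ ((1 + θ) / 2) ≤ (|a + b| ^ (1 + θ) + |a - b| ^ (1 + θ)) / 2 := by
  have hq : 0 < 1 + θ := by linarith
  rcases eq_or_ne a 0 with rfl | ha
  · obtain rfl : b = 0 := abs_nonpos_iff.mp (by simpa using hba)
    simp [Real.zero_rpow hq.ne', Real.zero_rpow (half_pos hq).ne']
  set x := b / a
  have hb : b = a * x := (mul_div_cancel₀ b ha).symm
  have hx : |x| ≤ 1 := by rwa [abs_div, div_le_one (abs_pos.mpr ha)]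
  have habs : ∀ y, |y| ≤ 1 → |a + a * y| = |a| * (1 + y) := fun y hy => by
    rw [← mul_one_add, abs_mul, abs_of_nonneg (a := 1 + y) (by linarith [neg_abs_le y])]
  calc (a ^ 2 + θ * b ^ 2) ^ ((1 + θ) / 2)
      = |a| ^ (1 + θ) * (1 + θ * x ^ 2) ^ ((1 + θ) / 2) := by
        rw [← sq_rpow_div_two, ← Real.mul_rpow (sq_nonneg a) (by positivity), hb]
        ring_nf
    _ ≤ |a| ^ (1 + θ) * (((1 + x) ^ (1 + θ) + (1 - x) ^ (1 + θ)) / 2) := by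
        gcongr
        exact one_add_mul_sq_rpow_le hθ₀ hθ₁ hx
    _ = (|a + b| ^ (1 + θ) + |a - b| ^ (1 + θ)) / 2 := by
        rw [hb, show a - a * x = a + a * -x by ring, habs x hx, habs (-x) (by rwa [abs_neg]),
          Real.mul_rpow (abs_nonneg a) (by linarith [neg_abs_le x]),
          Real.mul_rpow (abs_nonneg a) (by linarith [le_abs_self x]), ← sub_eq_add_neg]
        ring

theorem two_point_inequality {θ : ℝ} (hθ₀ : 0 ≤ θ) (hθ₁ : θ ≤ 1) (a b : ℝ) :
    (a ^ 2 + θ * b ^ 2) ^ ((1 + θ) / 2) ≤ (|a + b| ^ (1 + θ) + |a - b| ^ (1 + θ)) / 2 := by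
  rcases le_total |b| |a| with hba | hab
  · exact two_point_inequality_of_abs_le hθ₀ hθ₁ hba
  · have hsq : a ^ 2 ≤ b ^ 2 := sq_le_sq.mpr hab
    calc (a ^ 2 + θ * b ^ 2) ^ ((1 + θ) / 2) ≤ (b ^ 2 + θ * a ^ 2) ^ ((1 + θ) / 2) :=
          Real.rpow_le_rpow (by positivity) (by nlinarith) (by linarith)
      _ ≤ (|b + a| ^ (1 + θ) + |b - a| ^ (1 + θ)) / 2 :=
          two_point_inequality_of_abs_le hθ₀ hθ₁ hab
      _ = (|a + b| ^ (1 + θ) + |a - b| ^ (1 + θ)) / 2 := by rw [add_comm b, abs_sub_comm]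

theorem minkowski_sum_fin_two {ι : Type*} {s : ℝ} (hs : 1 ≤ s) (t : Finset ι) {a b : ι → ℝ}
    (ha : ∀ i, 0 ≤ a i) (hb : ∀ i, 0 ≤ b i) :
    ((∑ i ∈ t, a i) ^ s + (∑ i ∈ t, b i) ^ s) ^ (1 / s)
      ≤ ∑ i ∈ t, (a i ^ s + b i ^ s) ^ (1 / s) := by
  have : Fact (1 ≤ ENNReal.ofReal s) := ⟨by simpa using ENNReal.ofReal_le_ofReal hs⟩
  have hs' : (ENNReal.ofReal s).toReal = s := ENNReal.toReal_ofReal (by linarith)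
  have hnorm : ∀ x y : ℝ, 0 ≤ x → 0 ≤ y →
      ‖(WithLp.toLp _ ![x, y] : PiLp (ENNReal.ofReal s) (fun _ : Fin 2 => ℝ))‖ =
        (x ^ s + y ^ s) ^ (1 / s) := by
    intro x y hx hy
    rw [PiLp.norm_eq_sum (by rw [hs']; linarith), hs']
    simp [Fin.sum_univ_two, abs_of_nonneg hx, abs_of_nonneg hy]
  have hsum : ∑ i ∈ t, (WithLp.toLp _ ![a i, b i] : PiLp (ENNReal.ofReal s) fun _ : Fin 2 => ℝ)
      = WithLp.toLp _ ![∑ i ∈ t, a i, ∑ i ∈ t, b i] := by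
    ext k
    fin_cases k <;> simp
  have := norm_sum_le t fun i => (WithLp.toLp _ ![a i, b i] : PiLp (ENNReal.ofReal s) _)
  rwa [hsum, hnorm _ _ (sum_nonneg fun i _ => ha i) (sum_nonneg fun i _ => hb i),
    sum_congr rfl fun i _ => hnorm _ _ (ha i) (hb i)] at this

section LqNorm

variable {J : Type*} [Fintype J] [DecidableEq J]

theorem lqNorm_of_nonneg (q : ℝ) {f : (J → Bool) → ℝ} (hf : ∀ x, 0 ≤ f x) :
    lqNorm q f = (hcExp fun x => f x ^ q) ^ (1 / q) := by
  simp only [lqNorm, abs_of_nonneg (hf _)]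

theorem lqNorm_le_lqNorm {r : ℝ} (hr : 0 ≤ r) {f g : (J → Bool) → ℝ}
    (h : hcExp (fun x => |f x| ^ r) ≤ hcExp (fun x => |g x| ^ r)) : lqNorm r f ≤ lqNorm r g :=
  Real.rpow_le_rpow (hcExp_nonneg fun _ => Real.rpow_nonneg (abs_nonneg _) _) h
    (one_div_nonneg.mpr hr)

theorem lqNorm_const_mul {r c : ℝ} (hr : 0 < r) (hc : 0 ≤ c) (f : (J → Bool) → ℝ) :
    lqNorm r (fun x => c * f x) = c * lqNorm r f := by
  simp only [lqNorm, abs_mul, abs_of_nonneg hc, Real.mul_rpow hc (abs_nonneg _), hcExp_const_mul]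
  rw [Real.mul_rpow (Real.rpow_nonneg hc r)
      (hcExp_nonneg fun _ => Real.rpow_nonneg (abs_nonneg _) _),
    ← Real.rpow_mul hc, mul_one_div_cancel hr.ne', Real.rpow_one]

theorem lqNorm_sq {q : ℝ} (hq : 0 < q) (f : (J → Bool) → ℝ) :
    lqNorm q f ^ 2 = lqNorm (q / 2) (fun x => f x ^ 2) := by
  simp only [lqNorm, abs_sq, sq_rpow_div_two]
  rw [← Real.rpow_natCast,
    ← Real.rpow_mul (hcExp_nonneg fun _ => Real.rpow_nonneg (abs_nonneg _) _)]
  congr 1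
  field_simp
  norm_num

theorem abs_hcExp_le_lqNorm {q : ℝ} (hq : 1 ≤ q) (f : (J → Bool) → ℝ) :
    |hcExp f| ≤ lqNorm q f := by
  have hjensen : hcExp (fun x => |f x|) ^ q ≤ hcExp (fun x => |f x| ^ q) := by
    simpa only [hcExp_eq_sum_mul] using Real.rpow_arith_mean_le_arith_mean_rpow univ _ _
      (fun _ _ => by positivity) (by simp) (fun x _ => abs_nonneg (f x)) hq
  have habs : 0 ≤ hcExp fun x => |f x| := hcExp_nonneg fun x => abs_nonneg (f x)
  calc |hcExp f| ≤ hcExp fun x => |f x| := by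
        rw [hcExp, hcExp, abs_div, abs_of_pos (a := (2 : ℝ) ^ Fintype.card J) (by positivity)]
        exact div_le_div_of_nonneg_right (abs_sum_le_sum_abs _ _) (by positivity)
    _ = (hcExp (fun x => |f x|) ^ q) ^ (1 / q) := by
        rw [← Real.rpow_mul habs, mul_one_div_cancel (by linarith), Real.rpow_one]
    _ ≤ lqNorm q f := Real.rpow_le_rpow (Real.rpow_nonneg habs q) hjensen (by positivity)

/-- Reverse Minkowski inequality: Minkowski's inequality in `ℓ^{1/r}(Fin 2)`, applied to the
vectors `(u x ^ r, v x ^ r)` summed over `x`. -/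
theorem lqNorm_add_lqNorm_le {r : ℝ} (hr₀ : 0 < r) (hr₁ : r ≤ 1) {u v : (J → Bool) → ℝ}
    (hu : ∀ x, 0 ≤ u x) (hv : ∀ x, 0 ≤ v x) :
    lqNorm r u + lqNorm r v ≤ lqNorm r (fun x => u x + v x) := by
  set w : ℝ := ((2 : ℝ) ^ Fintype.card J)⁻¹
  have hw : 0 ≤ w := by positivity
  have hterm : ∀ a b : ℝ, 0 ≤ a → 0 ≤ b →
      ((w * a ^ r) ^ (1 / r) + (w * b ^ r) ^ (1 / r)) ^ r = w * (a + b) ^ r := by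
    intro a b ha hb
    have hpow : ∀ c : ℝ, 0 ≤ c → (w * c ^ r) ^ (1 / r) = w ^ (1 / r) * c := fun c hc => by
      rw [Real.mul_rpow hw (Real.rpow_nonneg hc r), ← Real.rpow_mul hc,
        mul_one_div_cancel hr₀.ne', Real.rpow_one]
    rw [hpow a ha, hpow b hb, ← mul_add,
      Real.mul_rpow (Real.rpow_nonneg hw _) (add_nonneg ha hb), ← Real.rpow_mul hw,
      one_div_mul_cancel hr₀.ne', Real.rpow_one]
  have key := minkowski_sum_fin_two (one_le_one_div hr₀ hr₁) univ
    (a := fun x => w * u x ^ r) (b := fun x => w * v x ^ r)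
    (fun x => mul_nonneg hw (Real.rpow_nonneg (hu x) r))
    (fun x => mul_nonneg hw (Real.rpow_nonneg (hv x) r))
  rw [one_div_one_div, sum_congr rfl fun x _ => hterm _ _ (hu x) (hv x),
    ← hcExp_eq_sum_mul fun x => u x ^ r, ← hcExp_eq_sum_mul fun x => v x ^ r,
    ← hcExp_eq_sum_mul fun x => (u x + v x) ^ r] at key
  rw [lqNorm_of_nonneg r hu, lqNorm_of_nonneg r hv,
    lqNorm_of_nonneg r fun x => add_nonneg (hu x) (hv x)]
  have hsum : 0 ≤ (hcExp fun x => u x ^ r) ^ (1 / r) + (hcExp fun x => v x ^ r) ^ (1 / r) :=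
    add_nonneg (Real.rpow_nonneg (hcExp_nonneg fun x => Real.rpow_nonneg (hu x) r) _)
      (Real.rpow_nonneg (hcExp_nonneg fun x => Real.rpow_nonneg (hv x) r) _)
  calc _ = (((hcExp fun x => u x ^ r) ^ (1 / r) + (hcExp fun x => v x ^ r) ^ (1 / r)) ^ r)
        ^ (1 / r) := by rw [← Real.rpow_mul hsum, mul_one_div_cancel hr₀.ne', Real.rpow_one]
    _ ≤ _ := Real.rpow_le_rpow (Real.rpow_nonneg hsum r) key (by positivity)

end LqNorm

section Hypercontractivity

variable {J : Type*} [Fintype J] [DecidableEq J]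

theorem lqNorm_walsh_mul (q : ℝ) (S : Finset J) (f : (J → Bool) → ℝ) :
    lqNorm q (fun x => walsh S x * f x) = lqNorm q f := by
  simp only [lqNorm, abs_mul, abs_walsh, one_mul]

theorem lqNorm_sub_rhoD_sq_add_mul_lqNorm_rhoD_sq_le {θ : ℝ} (hθ₀ : 0 ≤ θ) (hθ₁ : θ ≤ 1)
    (j : J) (f : (J → Bool) → ℝ) :
    lqNorm (1 + θ) (fun x => f x - rhoD j f x) ^ 2 + θ * lqNorm (1 + θ) (rhoD j f) ^ 2
      ≤ lqNorm (1 + θ) f ^ 2 := by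
  have hq : 0 < 1 + θ := by linarith
  have htwo : ∀ x, ((f x - rhoD j f x) ^ 2 + θ * rhoD j f x ^ 2) ^ ((1 + θ) / 2)
      ≤ (|f x| ^ (1 + θ) + |f (flipAt j x)| ^ (1 + θ)) / 2 := by
    intro x
    have h := two_point_inequality hθ₀ hθ₁ (f x - rhoD j f x) (rhoD j f x)
    rwa [sub_add_cancel, show f x - rhoD j f x - rhoD j f x = f (flipAt j x) by
      simp only [rhoD, flipAt]; ring] at h
  calc lqNorm (1 + θ) (fun x => f x - rhoD j f x) ^ 2 + θ * lqNorm (1 + θ) (rhoD j f) ^ 2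
      = lqNorm ((1 + θ) / 2) (fun x => (f x - rhoD j f x) ^ 2)
          + lqNorm ((1 + θ) / 2) (fun x => θ * rhoD j f x ^ 2) := by
        rw [lqNorm_sq hq, lqNorm_sq hq, lqNorm_const_mul (half_pos hq) hθ₀]
    _ ≤ lqNorm ((1 + θ) / 2) (fun x => (f x - rhoD j f x) ^ 2 + θ * rhoD j f x ^ 2) :=
        lqNorm_add_lqNorm_le (half_pos hq) (by linarith) (fun _ => sq_nonneg _)
          (fun _ => by positivity)
    _ ≤ lqNorm ((1 + θ) / 2) (fun x => f x ^ 2) := by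
        refine lqNorm_le_lqNorm (half_pos hq).le ?_
        calc hcExp (fun x => |(f x - rhoD j f x) ^ 2 + θ * rhoD j f x ^ 2| ^ ((1 + θ) / 2))
            ≤ hcExp (fun x => 2⁻¹ * (|f x| ^ (1 + θ) + |f (flipAt j x)| ^ (1 + θ))) :=
              hcExp_mono fun x => by
                rw [abs_of_nonneg (by positivity), ← div_eq_inv_mul]
                exact htwo x
          _ = hcExp (fun x => |f x ^ 2| ^ ((1 + θ) / 2)) := by
              rw [hcExp_const_mul, hcExp_add, hcExp_comp_flipAt j fun x => |f x| ^ (1 + θ)]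
              simp only [abs_sq, sq_rpow_div_two]
              ring
    _ = lqNorm (1 + θ) f ^ 2 := (lqNorm_sq hq f).symm

/-- The Bonami–Beckner inequality `‖T_{√θ} f‖₂² ≤ ‖f‖²_{1+θ}` is the case `s = univ`; truncating
to `s` lets the induction split off one coordinate at a time. -/
theorem sum_powerset_pow_card_mul_fcoef_sq_le {θ : ℝ} (hθ₀ : 0 ≤ θ) (hθ₁ : θ ≤ 1)
    (s : Finset J) (f : (J → Bool) → ℝ) :
    ∑ S ∈ s.powerset, θ ^ #S * fcoef f S ^ 2 ≤ lqNorm (1 + θ) f ^ 2 := by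
  induction s using Finset.induction_on generalizing f with
  | empty =>
    rw [powerset_empty, sum_singleton, card_empty, pow_zero, one_mul, fcoef_empty, ← sq_abs]
    exact pow_le_pow_left₀ (abs_nonneg _) (abs_hcExp_le_lqNorm (by linarith) f) 2
  | insert j s hj ih =>
    have hjS : ∀ S ∈ s.powerset, j ∉ S := fun S hS h => hj (mem_powerset.mp hS h)
    calc ∑ S ∈ (insert j s).powerset, θ ^ #S * fcoef f S ^ 2
        = ∑ S ∈ s.powerset, θ ^ #S * fcoef (fun x => f x - rhoD j f x) S ^ 2
          + θ * ∑ S ∈ s.powerset,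
              θ ^ #S * fcoef (fun x => walsh {j} x * rhoD j f x) S ^ 2 := by
          rw [sum_powerset_insert hj, mul_sum]
          congr 1 <;> refine sum_congr rfl fun S hS => ?_
          · rw [fcoef_sub, fcoef_rhoD, if_neg (hjS S hS), sub_zero]
          · rw [fcoef_walsh_singleton_mul (hjS S hS), fcoef_rhoD, if_pos (mem_insert_self j S),
              card_insert_of_notMem (hjS S hS), pow_succ]
            ring
      _ ≤ lqNorm (1 + θ) (fun x => f x - rhoD j f x) ^ 2 + θ * lqNorm (1 + θ) (rhoD j f) ^ 2 :=
          add_le_add (ih _) (mul_le_mul_of_nonneg_left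
            ((ih _).trans_eq (by rw [lqNorm_walsh_mul])) hθ₀)
      _ ≤ lqNorm (1 + θ) f ^ 2 := lqNorm_sub_rhoD_sq_add_mul_lqNorm_rhoD_sq_le hθ₀ hθ₁ j f

end Hypercontractivity

section Integration

variable {J : Type*} [Fintype J] [DecidableEq J]

theorem sum_filter_mem_pow_mul_fcoef_sq_le {p : ℝ} (hp₀ : 0 ≤ p) (hp₁ : p ≤ 1) (j : J)
    (f : (J → Bool) → ℝ) :
    ∑ S ∈ univ.filter (j ∈ ·), p ^ (2 * #S) * fcoef f S ^ 2
      ≤ lqNorm (1 + p ^ 2) (rhoD j f) ^ 2 := by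
  have h := sum_powerset_pow_card_mul_fcoef_sq_le (sq_nonneg p) (pow_le_one₀ hp₀ hp₁) univ
    (rhoD j f)
  rw [powerset_univ] at h
  refine le_of_eq_of_le ?_ h
  rw [sum_filter]
  refine sum_congr rfl fun S _ => ?_
  rw [fcoef_rhoD, pow_mul]
  split_ifs <;> simp

theorem continuous_lqNorm_one_add_sq (f : (J → Bool) → ℝ) :
    Continuous fun p : ℝ => lqNorm (1 + p ^ 2) f := by
  have hpos : ∀ p : ℝ, 0 < 1 + p ^ 2 := fun p => by positivity
  refine Continuous.rpow ?_ (continuous_const.div (by fun_prop) fun p => (hpos p).ne')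
    fun p => Or.inr (one_div_pos.mpr (hpos p))
  exact (continuous_finsetSum _ fun x _ =>
    continuous_const.rpow (by fun_prop) fun p => Or.inr (hpos p)).div_const _

end Integration

theorem integral_sum_pow_mul {ι : Type*} (t : Finset ι) (k : ι → ℕ) (c : ι → ℝ) :
    ∫ p in (0 : ℝ)..1, ∑ i ∈ t, p ^ (2 * k i) * c i = ∑ i ∈ t, c i / (2 * k i + 1) := by
  rw [intervalIntegral.integral_finsetSum fun i _ =>
    Continuous.intervalIntegrable (by fun_prop) 0 1]
  refine sum_congr rfl fun i _ => ?_
  rw [intervalIntegral.integral_mul_const, integral_pow, one_pow, zero_pow (Nat.succ_ne_zero _),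
    sub_zero]
  push_cast
  ring

theorem sum_erase_empty_le_three_mul_sum_sum_filter_mem {J : Type*} [Fintype J] [DecidableEq J]
    (c : Finset J → ℝ) (hc : ∀ S, 0 ≤ c S) :
    ∑ S ∈ univ.erase ∅, c S ≤ 3 * ∑ j, ∑ S ∈ univ.filter (j ∈ ·), c S / (2 * #S + 1) := by
  have hterm : ∀ S, 0 ≤ 3 * (#S * (c S / (2 * #S + 1))) := fun S => by
    have := hc S
    positivity
  calc ∑ S ∈ univ.erase ∅, c S
      ≤ ∑ S ∈ univ.erase ∅, 3 * (#S * (c S / (2 * #S + 1))) := by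
        refine sum_le_sum fun S hS => ?_
        have hcard : (1 : ℝ) ≤ #S := by
          exact_mod_cast card_pos.mpr (nonempty_iff_ne_empty.mpr (ne_of_mem_erase hS))
        rw [← mul_div_assoc, ← mul_div_assoc, le_div_iff₀ (by positivity)]
        nlinarith [hc S]
    _ ≤ ∑ S, 3 * (#S * (c S / (2 * #S + 1))) :=
        sum_le_sum_of_subset_of_nonneg (erase_subset _ _) fun S _ _ => hterm S
    _ = 3 * ∑ j, ∑ S ∈ univ.filter (j ∈ ·), c S / (2 * #S + 1) := by
        rw [sum_comm' (t' := univ) (s' := id) (by simp), mul_sum]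
        simp only [id, sum_const, nsmul_eq_mul]

/-- `Var(f) ≤ 3 Σ_j ∫_0^1 ‖ρ_j f‖_{1+p²}² dp`. -/
theorem stmt5 {J : Type*} [Fintype J] [DecidableEq J] (f : (J → Bool) → ℝ) :
    hcVar f ≤ 3 * ∑ j : J, ∫ p in (0:ℝ)..1, (lqNorm (1 + p ^ 2) (rhoD j f)) ^ 2 := by
  calc hcVar f = ∑ S ∈ univ.erase ∅, fcoef f S ^ 2 := hcVar_eq_sum_fcoef_sq f
    _ ≤ 3 * ∑ j, ∑ S ∈ univ.filter (j ∈ ·), fcoef f S ^ 2 / (2 * #S + 1) :=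
        sum_erase_empty_le_three_mul_sum_sum_filter_mem _ fun S => sq_nonneg _
    _ = 3 * ∑ j, ∫ p in (0:ℝ)..1,
          ∑ S ∈ univ.filter (j ∈ ·), p ^ (2 * #S) * fcoef f S ^ 2 := by
        simp only [integral_sum_pow_mul]
    _ ≤ 3 * ∑ j : J, ∫ p in (0:ℝ)..1, (lqNorm (1 + p ^ 2) (rhoD j f)) ^ 2 := by
        gcongr with j
        exact intervalIntegral.integral_mono_on zero_le_one
          (Continuous.intervalIntegrable (by fun_prop) 0 1)
          (((continuous_lqNorm_one_add_sq _).pow 2).intervalIntegrable 0 1)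
          fun p hp => sum_filter_mem_pow_mul_fcoef_sq_le hp.1 hp.2 j f
end

section
/- For any real-valued random variable h on a probability space with 0 < ‖h‖_1 ≤ ‖h‖_2 < ∞, one has ∫_0^1 ‖h‖_{1+p^2}^2 dp ≤ ‖h‖_2^2 · (1 - (‖h‖_1/‖h‖_2)^{6/5}) / log(‖h‖_2/‖h‖_1), where the right side is interpreted as ‖h‖_2^2 · (6/5) when ‖h‖_1 = ‖h‖_2. -/
/-!
Write `A = ‖h‖₁`, `B = ‖h‖₂²` and `r = A / √B`, so that `0 < r ≤ 1` by Cauchy–Schwarz.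
Hölder interpolation `∫ |h|^(1+θ) ≤ (∫ h²)^θ (∫ |h|)^(1-θ)` with `θ = p²` gives
`‖h‖_{1+p²}² ≤ B r^(2(1-p²)/(1+p²)) ≤ B r^(2-2p)`, since `2(1-p²)/(1+p²) ≥ 2 - 2p`.
The majorant integrates to `B (1 - r²) / (2 log r⁻¹)`, and `(1 - r²)/2 ≤ 1 - r ≤ 1 - r^(6/5)`.
-/

open MeasureTheory

theorem two_sub_two_mul_le_two_mul_one_sub_sq_div (p : ℝ) (hp0 : 0 ≤ p) :
    2 - 2 * p ≤ 2 * (1 - p ^ 2) / (1 + p ^ 2) := by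
  rw [le_div_iff₀ (by positivity)]
  nlinarith [mul_nonneg hp0 (sq_nonneg (p - 1))]

theorem rpow_mul_rpow_rpow_eq_mul_div_rpow {A B : ℝ} (hA : 0 < A) (hB : 0 < B) {θ : ℝ}
    (hθ : 0 ≤ θ) :
    (B ^ θ * A ^ (1 - θ)) ^ (2 / (1 + θ)) =
      B * (A / B ^ ((1:ℝ) / 2)) ^ (2 * (1 - θ) / (1 + θ)) := by
  have hθ' : 1 + θ ≠ 0 := by linarith
  apply Real.log_injOn_pos (by simp; positivity) (by simp; positivity)
  rw [Real.log_rpow (by positivity), Real.log_mul (by positivity) (by positivity),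
    Real.log_mul (by positivity) (by positivity), Real.log_rpow hB, Real.log_rpow hA,
    Real.log_rpow (by positivity), Real.log_div hA.ne' (by positivity), Real.log_rpow hB]
  field_simp
  ring

theorem integral_rpow_two_sub_two_mul {r : ℝ} (hr0 : 0 < r) (hr1 : r ≠ 1) :
    ∫ p in (0:ℝ)..1, r ^ (2 - 2 * p) = (1 - r ^ 2) / (2 * Real.log r⁻¹) := by
  have hlog : Real.log r ≠ 0 := Real.log_ne_zero_of_pos_of_ne_one hr0 hr1
  have hderiv : ∀ p : ℝ, HasDerivAt (fun p => r ^ (2 - 2 * p) / (2 * Real.log r⁻¹))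
      (r ^ (2 - 2 * p)) p := by
    intro p
    refine ((((hasDerivAt_id p).const_mul 2).const_sub 2).const_rpow hr0 |>.div_const
      (2 * Real.log r⁻¹)).congr_deriv ?_
    rw [Real.log_inv]
    field_simp
    simp
  rw [intervalIntegral.integral_eq_sub_of_hasDerivAt (fun p _ => hderiv p)
    ((continuous_const.rpow (by fun_prop) fun _ => Or.inl hr0.ne').intervalIntegrable _ _)]
  norm_num
  ring

theorem one_sub_sq_le_two_mul_one_sub_rpow {r q : ℝ} (hr0 : 0 ≤ r) (hr1 : r ≤ 1) (hq : 1 ≤ q) :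
    1 - r ^ 2 ≤ 2 * (1 - r ^ q) := by
  have : r ^ q ≤ r := by simpa using Real.rpow_le_rpow_of_exponent_ge' hr0 hr1 zero_le_one hq
  nlinarith [sq_nonneg (1 - r)]

theorem intervalIntegral.integral_mono_on_of_nonneg {f g : ℝ → ℝ} {a b : ℝ} (hab : a ≤ b)
    (hf : ∀ x ∈ Set.Icc a b, 0 ≤ f x) (hg : IntervalIntegrable g volume a b)
    (hfg : ∀ x ∈ Set.Icc a b, f x ≤ g x) : ∫ x in a..b, f x ≤ ∫ x in a..b, g x := by
  rw [intervalIntegral.integral_of_le hab, intervalIntegral.integral_of_le hab]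
  exact integral_mono_of_nonneg
    (ae_restrict_of_forall_mem measurableSet_Ioc fun x hx => hf x (Set.Ioc_subset_Icc_self hx))
    hg.1
    (ae_restrict_of_forall_mem measurableSet_Ioc fun x hx => hfg x (Set.Ioc_subset_Icc_self hx))

section Holder

variable {α : Type*} [MeasurableSpace α] {μ : Measure α}

theorem integral_rpow_mul_rpow_le {f g : α → ℝ} (hf0 : 0 ≤ᵐ[μ] f) (hg0 : 0 ≤ᵐ[μ] g)
    (hf : Integrable f μ) (hg : Integrable g μ) {p q : ℝ} (hp : 0 ≤ p) (hq : 0 ≤ q)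
    (hpq : p + q = 1) :
    ∫ a, f a ^ p * g a ^ q ∂μ ≤ (∫ a, f a ∂μ) ^ p * (∫ a, g a ∂μ) ^ q := by
  have hfg0 : 0 ≤ᵐ[μ] fun a => f a ^ p * g a ^ q := by
    filter_upwards [hf0, hg0] with a ha hb
    exact mul_nonneg (Real.rpow_nonneg ha p) (Real.rpow_nonneg hb q)
  have hfg : AEStronglyMeasurable (fun a => f a ^ p * g a ^ q) μ :=
    ((hf.aemeasurable.pow_const p).mul (hg.aemeasurable.pow_const q)).aestronglyMeasurable
  rw [integral_eq_lintegral_of_nonneg_ae hfg0 hfg, integral_eq_lintegral_of_nonneg_ae hf0 hf.1,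
    integral_eq_lintegral_of_nonneg_ae hg0 hg.1, ENNReal.toReal_rpow, ENNReal.toReal_rpow,
    ← ENNReal.toReal_mul]
  have hofReal : ∀ᵐ a ∂μ, ENNReal.ofReal (f a ^ p * g a ^ q) =
      ENNReal.ofReal (f a) ^ p * ENNReal.ofReal (g a) ^ q := by
    filter_upwards [hf0, hg0] with a ha hb
    rw [ENNReal.ofReal_mul (Real.rpow_nonneg ha p), ENNReal.ofReal_rpow_of_nonneg ha hp,
      ENNReal.ofReal_rpow_of_nonneg hb hq]
  rw [lintegral_congr_ae hofReal]
  refine ENNReal.toReal_mono ?_ (ENNReal.lintegral_mul_norm_pow_le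
    hf.aemeasurable.ennreal_ofReal hg.aemeasurable.ennreal_ofReal hp hq hpq)
  exact ENNReal.mul_ne_top (ENNReal.rpow_ne_top_of_nonneg hp hf.lintegral_lt_top.ne)
    (ENNReal.rpow_ne_top_of_nonneg hq hg.lintegral_lt_top.ne)

theorem integral_abs_rpow_one_add_le {h : α → ℝ} (h1 : Integrable h μ) (h2 : MemLp h 2 μ)
    {θ : ℝ} (hθ0 : 0 ≤ θ) (hθ1 : θ ≤ 1) :
    ∫ a, |h a| ^ (1 + θ) ∂μ ≤ (∫ a, h a ^ 2 ∂μ) ^ θ * (∫ a, |h a| ∂μ) ^ (1 - θ) := by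
  have hsplit : ∀ a, |h a| ^ (1 + θ) = (h a ^ 2) ^ θ * |h a| ^ (1 - θ) := fun a => by
    rw [← sq_abs, ← Real.rpow_natCast, ← Real.rpow_mul (abs_nonneg _),
      ← Real.rpow_add' (abs_nonneg _) (by push_cast; linarith)]
    push_cast
    ring_nf
  simp_rw [hsplit]
  exact integral_rpow_mul_rpow_le (ae_of_all _ fun a => sq_nonneg _)
    (ae_of_all _ fun a => abs_nonneg _) h2.integrable_sq h1.abs hθ0 (by linarith) (by ring)

end Holder

section ProbabilitySpace

variable {Ω : Type*} [MeasurableSpace Ω] {μ : Measure Ω} [IsProbabilityMeasure μ] {h : Ω → ℝ}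

theorem sq_integral_abs_le_integral_sq (h2 : MemLp h 2 μ) :
    (∫ a, |h a| ∂μ) ^ 2 ≤ ∫ a, h a ^ 2 ∂μ := by
  have := ProbabilityTheory.variance_nonneg |h| μ
  rw [ProbabilityTheory.variance_eq_sub h2.abs] at this
  simpa [sq_abs] using this

theorem integral_abs_div_rpow_mem_Ioc (h2 : MemLp h 2 μ) (hA : 0 < ∫ a, |h a| ∂μ) :
    (∫ a, |h a| ∂μ) / (∫ a, h a ^ 2 ∂μ) ^ ((1:ℝ) / 2) ∈ Set.Ioc 0 1 := by
  have hb : (∫ a, |h a| ∂μ) ≤ (∫ a, h a ^ 2 ∂μ) ^ ((1:ℝ) / 2) := by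
    rw [← Real.sqrt_eq_rpow]
    exact Real.le_sqrt_of_sq_le (sq_integral_abs_le_integral_sq h2)
  exact ⟨div_pos hA (hA.trans_le hb), div_le_one_of_le₀ hb (hA.le.trans hb)⟩

theorem integral_abs_rpow_rpow_le (h2 : MemLp h 2 μ) (hA : 0 < ∫ a, |h a| ∂μ) {p : ℝ}
    (hp0 : 0 ≤ p) (hp1 : p ≤ 1) :
    (∫ a, |h a| ^ (1 + p ^ 2) ∂μ) ^ (2 / (1 + p ^ 2)) ≤
      (∫ a, h a ^ 2 ∂μ) *
        ((∫ a, |h a| ∂μ) / (∫ a, h a ^ 2 ∂μ) ^ ((1:ℝ) / 2)) ^ (2 - 2 * p) := by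
  obtain ⟨hr0, hr1⟩ := integral_abs_div_rpow_mem_Ioc h2 hA
  have hB : 0 < ∫ a, h a ^ 2 ∂μ := (pow_pos hA 2).trans_le (sq_integral_abs_le_integral_sq h2)
  calc (∫ a, |h a| ^ (1 + p ^ 2) ∂μ) ^ (2 / (1 + p ^ 2))
      ≤ ((∫ a, h a ^ 2 ∂μ) ^ (p ^ 2) * (∫ a, |h a| ∂μ) ^ (1 - p ^ 2)) ^ (2 / (1 + p ^ 2)) :=
        Real.rpow_le_rpow (integral_nonneg fun a => by positivity)
          (integral_abs_rpow_one_add_le (h2.integrable one_le_two) h2 (sq_nonneg p)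
            (pow_le_one₀ hp0 hp1))
          (by positivity)
    _ = (∫ a, h a ^ 2 ∂μ) * ((∫ a, |h a| ∂μ) / (∫ a, h a ^ 2 ∂μ) ^ ((1:ℝ) / 2)) ^
          (2 * (1 - p ^ 2) / (1 + p ^ 2)) :=
        rpow_mul_rpow_rpow_eq_mul_div_rpow hA hB (sq_nonneg p)
    _ ≤ _ := mul_le_mul_of_nonneg_left (Real.rpow_le_rpow_of_exponent_ge hr0 hr1
        (two_sub_two_mul_le_two_mul_one_sub_sq_div p hp0)) hB.le

end ProbabilitySpace

open scoped Classical in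
/-- for a random variable `h` with `0 < ‖h‖₁ ≤ ‖h‖₂ < ∞`,
`∫_0^1 ‖h‖_{1+p²}² dp ≤ ‖h‖₂² (1 - (‖h‖₁/‖h‖₂)^{6/5}) / log(‖h‖₂/‖h‖₁)`,
the right-hand side being interpreted as `(6/5)‖h‖₂²` when `‖h‖₁ = ‖h‖₂`. -/
theorem stmt7 {Ω : Type*} [MeasurableSpace Ω] (μ : Measure Ω) [IsProbabilityMeasure μ]
    (h : Ω → ℝ) (hL2 : MemLp h 2 μ) (h1 : 0 < ∫ x, |h x| ∂μ) :
    (∫ p in (0:ℝ)..1, (∫ x, |h x| ^ (1 + p ^ 2) ∂μ) ^ (2 / (1 + p ^ 2))) ≤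
      if (∫ x, |h x| ∂μ) = (∫ x, h x ^ 2 ∂μ) ^ ((1:ℝ)/2) then
        (∫ x, h x ^ 2 ∂μ) * (6 / 5)
      else
        (∫ x, h x ^ 2 ∂μ) *
          (1 - ((∫ x, |h x| ∂μ) / (∫ x, h x ^ 2 ∂μ) ^ ((1:ℝ)/2)) ^ ((6:ℝ)/5)) /
          Real.log ((∫ x, h x ^ 2 ∂μ) ^ ((1:ℝ)/2) / ∫ x, |h x| ∂μ) := by
  obtain ⟨hr0, hr1⟩ := integral_abs_div_rpow_mem_Ioc hL2 h1
  set A := ∫ x, |h x| ∂μ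
  set B := ∫ x, h x ^ 2 ∂μ
  set r := A / B ^ ((1:ℝ) / 2) with hr
  have hB : 0 ≤ B := integral_nonneg fun x => sq_nonneg _
  refine (intervalIntegral.integral_mono_on_of_nonneg (g := fun p => B * r ^ (2 - 2 * p))
    zero_le_one (fun p _ => Real.rpow_nonneg (integral_nonneg fun x => by positivity) _)
    ((continuous_const.mul (continuous_const.rpow (by fun_prop)
      fun _ => Or.inl hr0.ne')).intervalIntegrable 0 1)
    (fun p hp => integral_abs_rpow_rpow_le hL2 h1 hp.1 hp.2)).trans ?_
  rw [intervalIntegral.integral_const_mul]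
  split_ifs with hAb
  · have hr1 : r = 1 := by rw [hr, hAb, div_self (h1.trans_eq hAb).ne']
    simp only [hr1, Real.one_rpow, intervalIntegral.integral_const, sub_zero, smul_eq_mul, one_mul]
    linarith
  · have hb : 0 < B ^ ((1:ℝ) / 2) := (div_pos_iff_of_pos_left h1).1 hr0
    have hr1' : r < 1 := hr1.lt_of_ne fun hr1 => hAb ((div_eq_one_iff_eq hb.ne').1 hr1)
    have hlog : 0 < Real.log r⁻¹ := Real.log_pos ((one_lt_inv₀ hr0).2 hr1')
    have hbA : B ^ ((1:ℝ) / 2) / A = r⁻¹ := (inv_div _ _).symm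
    rw [integral_rpow_two_sub_two_mul hr0 hr1'.ne, hbA, mul_div_assoc]
    calc B * ((1 - r ^ 2) / (2 * Real.log r⁻¹)) = B * ((1 - r ^ 2) / 2 / Real.log r⁻¹) := by ring
      _ ≤ B * ((1 - r ^ ((6:ℝ) / 5)) / Real.log r⁻¹) := by
        gcongr
        linarith [one_sub_sq_le_two_mul_one_sub_rpow hr0.le hr1 (by norm_num : (1:ℝ) ≤ 6 / 5)]
end

section
/- (Sharpened form) For every finite set J and every f: {0,1}^J → ℝ, Var(f) ≤ 3 Σ_{j∈J} ‖f_j‖_2^2 · (1 - (‖f_j‖_1/‖f_j‖_2)^{6/5}) / log(‖f_j‖_2/‖f_j‖_1), where f_j := (f - f∘σ_j)/2, with the j-th summand interpreted as (6/5)‖f_j‖_2^2 when ‖f_j‖_1 = ‖f_j‖_2, and as 0 when f_j ≡ 0. -/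
open Finset

/-!
In the Walsh basis, `Var f = ∑_j ∑_S \hat{f_j}(S)² / |S|`, because `\hat{f_j}(S)` is `\hat f(S)`
for `j ∈ S` and `0` otherwise. Fix `g = f_j` and split the levels at some `K ≥ 1`:
`1/|S| ≤ (3^K/K) 3^{-|S|} + 1/(K+1)`. The low levels are controlled by hypercontractivity:
Bonami's lemma `E (T_ρ h)⁴ ≤ (E h²)²` for `ρ² ≤ 1/3` (by induction on the coordinates `h` depends
on) and two Cauchy–Schwarz steps give `∑_S 3^{-|S|} \hat g(S)² ≤ ‖g‖₁ ‖g‖₂ = e^{-L} ‖g‖₂²`, where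
`L = log (‖g‖₂/‖g‖₁)`. Taking no split for `L ≤ 13/6`, `K = 2` for `L ≤ 7` and `K = ⌈L/2⌉`
beyond, elementary bounds on the exponential give `3 ‖g‖₂² (1 - e^{-6L/5}) / L`.
-/

open scoped BigOperators symmDiff

namespace BooleanCube

section Flip

variable {J : Type*} [DecidableEq J]

def flipAt (j : J) (x : J → Bool) : J → Bool := Function.update x j (!x j)

@[simp] lemma flipAt_apply_self (j : J) (x : J → Bool) : flipAt j x j = !x j := by
  simp [flipAt]

lemma flipAt_apply_of_ne {i j : J} (h : i ≠ j) (x : J → Bool) : flipAt j x i = x i :=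
  Function.update_of_ne h _ _

lemma flipAt_involutive (j : J) : Function.Involutive (flipAt j) := by
  intro x
  ext i
  rcases eq_or_ne i j with rfl | h
  · simp
  · simp [flipAt_apply_of_ne h]

lemma rhoD_apply (j : J) (f : (J → Bool) → ℝ) (x : J → Bool) :
    rhoD j f x = (f x - f (flipAt j x)) / 2 := rfl

end Flip

section Expectation

variable {J : Type*} [Fintype J] [DecidableEq J]

lemma hcExp_eq_expect (f : (J → Bool) → ℝ) : hcExp f = 𝔼 x, f x := by
  simp [hcExp, Fintype.expect_eq_sum_div_card]

lemma expect_comp_flipAt (j : J) (f : (J → Bool) → ℝ) : 𝔼 x, f (flipAt j x) = 𝔼 x, f x :=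
  Fintype.expect_bijective _ (flipAt_involutive j).bijective _ _ fun _ => rfl

end Expectation

section Walsh

variable {J : Type*}

lemma card_add_card_eq_card_symmDiff_add [DecidableEq J] (A B : Finset J) :
    #A + #B = #(A ∆ B) + 2 * #(A ∩ B) := by
  have hA := card_sdiff_add_card_inter A B
  have hB := card_sdiff_add_card_inter B A
  have hAB : #(A ∆ B) = #(A \ B) + #(B \ A) := card_union_of_disjoint disjoint_sdiff_sdiff
  rw [inter_comm] at hB
  omega

lemma walsh_mul_walsh [DecidableEq J] (S T : Finset J) (x : J → Bool) :
    walsh S x * walsh T x = walsh (S ∆ T) x := by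
  have hfilter : (S ∆ T).filter (x · = true) = S.filter (x · = true) ∆ T.filter (x · = true) := by
    ext
    simp only [mem_filter, mem_symmDiff]
    tauto
  rw [walsh, walsh, walsh, ← pow_add, card_add_card_eq_card_symmDiff_add, hfilter, pow_add,
    pow_mul]
  simp

lemma walsh_mul_self (S : Finset J) (x : J → Bool) : walsh S x * walsh S x = 1 := by
  simp [walsh, ← pow_add, ← two_mul, pow_mul]

lemma walsh_eq_prod (S : Finset J) (x : J → Bool) :
    walsh S x = ∏ j ∈ S, if x j = true then -1 else 1 := by
  rw [prod_ite, prod_const, prod_const_one, mul_one, walsh]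

lemma walsh_flipAt [DecidableEq J] (j : J) (S : Finset J) (x : J → Bool) :
    walsh S (flipAt j x) = (if j ∈ S then -1 else 1) * walsh S x := by
  simp only [walsh_eq_prod]
  split_ifs with hj
  · rw [← mul_prod_erase S _ hj, ← mul_prod_erase S _ hj,
      prod_congr rfl fun i hi => by rw [flipAt_apply_of_ne (ne_of_mem_erase hi)]]
    cases h : x j <;> simp [h]
  · rw [one_mul]
    exact prod_congr rfl fun i hi => by rw [flipAt_apply_of_ne (ne_of_mem_of_not_mem hi hj)]

lemma sum_walsh_mul_walsh [Fintype J] [DecidableEq J] (x y : J → Bool) :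
    ∑ S, walsh S x * walsh S y = if x = y then 2 ^ Fintype.card J else 0 := by
  have hprod : ∀ S : Finset J, walsh S x * walsh S y =
      ∏ j ∈ S, (if x j = true then -1 else 1) * (if y j = true then -1 else 1) := by
    intro S
    rw [walsh_eq_prod, walsh_eq_prod, prod_mul_distrib]
  simp_rw [hprod, ← powerset_univ, ← prod_one_add]
  split_ifs with hxy
  · subst hxy
    have htwo : ∀ j,
        1 + (if x j = true then -1 else 1) * (if x j = true then -1 else 1) = (2 : ℝ) := by
      intro j
      split_ifs <;> norm_num
    rw [prod_congr rfl fun j _ => htwo j, prod_const, card_univ]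
  · obtain ⟨j, hj⟩ := Function.ne_iff.mp hxy
    refine prod_eq_zero (mem_univ j) ?_
    cases hx : x j <;> cases hy : y j <;> simp_all

end Walsh

section Fourier

variable {J : Type*} [Fintype J] [DecidableEq J]

lemma fcoef_eq_expect (f : (J → Bool) → ℝ) (S : Finset J) :
    fcoef f S = 𝔼 x, f x * walsh S x :=
  hcExp_eq_expect _

lemma expect_walsh (S : Finset J) : 𝔼 x, walsh S x = if S = ∅ then 1 else 0 := by
  split_ifs with hS
  · simp [hS, walsh]
  · obtain ⟨j, hj⟩ := nonempty_iff_ne_empty.mpr hS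
    have hneg : 𝔼 x, walsh S x = -𝔼 x, walsh S x := by
      conv_lhs => rw [← expect_comp_flipAt j]
      simp [walsh_flipAt, hj, expect_neg_distrib]
    linarith

lemma expect_walsh_mul_walsh (S T : Finset J) :
    𝔼 x, walsh S x * walsh T x = if S = T then 1 else 0 := by
  simp [walsh_mul_walsh, expect_walsh]

lemma fourier_inversion (f : (J → Bool) → ℝ) (x : J → Bool) :
    ∑ S, fcoef f S * walsh S x = f x := by
  simp_rw [fcoef_eq_expect, expect_mul, ← expect_sum_comm, mul_assoc, ← mul_sum,
    sum_walsh_mul_walsh, mul_ite, mul_zero, Fintype.expect_eq_sum_div_card, sum_ite_eq',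
    mem_univ, if_true]
  simp

lemma expect_mul_eq_sum_fcoef_mul (f g : (J → Bool) → ℝ) :
    𝔼 x, f x * g x = ∑ S, fcoef f S * fcoef g S := by
  simp_rw [fcoef_eq_expect g, mul_expect, ← expect_sum_comm]
  refine expect_congr rfl fun x _ => ?_
  rw [← fourier_inversion f x, sum_mul]
  exact sum_congr rfl fun S _ => by ring

lemma expect_sq_eq_sum_fcoef_sq (f : (J → Bool) → ℝ) :
    𝔼 x, f x ^ 2 = ∑ S, fcoef f S ^ 2 := by
  simp_rw [sq, expect_mul_eq_sum_fcoef_mul]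

lemma fcoef_comp_flipAt (j : J) (f : (J → Bool) → ℝ) (S : Finset J) :
    fcoef (fun x => f (flipAt j x)) S = (if j ∈ S then -1 else 1) * fcoef f S := by
  rw [fcoef_eq_expect, fcoef_eq_expect, mul_expect, ← expect_comp_flipAt j]
  simp_rw [(flipAt_involutive j) _, walsh_flipAt]
  exact expect_congr rfl fun x _ => by ring

lemma fcoef_rhoD (j : J) (f : (J → Bool) → ℝ) (S : Finset J) :
    fcoef (rhoD j f) S = if j ∈ S then fcoef f S else 0 := by
  have hflip := fcoef_comp_flipAt j f S
  simp only [fcoef_eq_expect, rhoD_apply] at hflip ⊢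
  simp_rw [sub_div, sub_mul, expect_sub_distrib, div_mul_eq_mul_div, ← expect_div, hflip]
  split_ifs <;> ring

lemma fcoef_const (c : ℝ) (S : Finset J) :
    fcoef (fun _ => c) S = if S = ∅ then c else 0 := by
  rw [fcoef_eq_expect, ← mul_expect, expect_walsh]
  simp

lemma hcVar_eq_sum_fcoef_sq (f : (J → Bool) → ℝ) :
    hcVar f = ∑ S, if S = ∅ then 0 else fcoef f S ^ 2 := by
  have hcoef : ∀ S, fcoef (fun x => f x - hcExp f) S = if S = ∅ then 0 else fcoef f S := by
    intro S
    simp only [fcoef_eq_expect, sub_mul, expect_sub_distrib]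
    split_ifs with hS
    · simp [hS, walsh, hcExp_eq_expect]
    · simp [← mul_expect, expect_walsh, hS]
  rw [hcVar, hcExp_eq_expect, expect_sq_eq_sum_fcoef_sq]
  simp_rw [hcoef, ite_pow, zero_pow two_ne_zero]

lemma hcVar_eq_sum_rhoD (f : (J → Bool) → ℝ) :
    hcVar f = ∑ j, ∑ S, fcoef (rhoD j f) S ^ 2 / #S := by
  simp_rw [hcVar_eq_sum_fcoef_sq, fcoef_rhoD, ite_pow, zero_pow two_ne_zero, ite_div, zero_div]
  rw [sum_comm]
  refine sum_congr rfl fun S _ => ?_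
  rw [sum_ite_mem, univ_inter, sum_const, nsmul_eq_mul]
  split_ifs with hS
  · simp [hS]
  · have : (#S : ℝ) ≠ 0 := by simpa using hS
    field_simp

end Fourier

section DependsOn

variable {J β : Type*} {s : Set J}

lemma _root_.DependsOn.comp_flipAt [DecidableEq J] {j : J} {f : (J → Bool) → β}
    (hf : DependsOn f s) (hj : j ∉ s) (x : J → Bool) : f (flipAt j x) = f x :=
  hf fun _ hi => flipAt_apply_of_ne (ne_of_mem_of_not_mem hi hj) x

lemma _root_.DependsOn.of_insert_of_comp_flipAt [DecidableEq J] {j : J} {f : (J → Bool) → β}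
    (hf : DependsOn f (insert j s)) (hinv : ∀ x, f (flipAt j x) = f x) : DependsOn f s := by
  intro x y hxy
  by_cases hj : x j = y j
  · exact hf fun i hi => hi.elim (fun h => h ▸ hj) (hxy i)
  · rw [← hinv y]
    refine hf fun i hi => ?_
    rcases eq_or_ne i j with rfl | hij
    · cases hx : x i <;> cases hy : y i <;> simp_all
    · rw [flipAt_apply_of_ne hij]
      exact hxy i (hi.resolve_left hij)

lemma dependsOn_walsh (S : Finset J) : DependsOn (walsh S) (S : Set J) := by
  intro x y hxy
  simp only [walsh_eq_prod]
  exact prod_congr rfl fun i hi => by rw [hxy i hi]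

end DependsOn

section Noise

variable {J : Type*} [Fintype J] [DecidableEq J]

noncomputable def noiseOp (ρ : ℝ) (f : (J → Bool) → ℝ) (x : J → Bool) : ℝ :=
  ∑ S, ρ ^ #S * fcoef f S * walsh S x

lemma eq_of_fcoef_eq {f g : (J → Bool) → ℝ} (h : ∀ S, fcoef f S = fcoef g S) : f = g := by
  ext x
  rw [← fourier_inversion f, ← fourier_inversion g]
  simp_rw [h]

lemma fcoef_noiseOp (ρ : ℝ) (f : (J → Bool) → ℝ) (S : Finset J) :
    fcoef (noiseOp ρ f) S = ρ ^ #S * fcoef f S := by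
  simp_rw [fcoef_eq_expect (noiseOp ρ f), noiseOp, sum_mul, expect_sum_comm, mul_assoc,
    ← mul_expect, expect_walsh_mul_walsh, mul_ite, mul_one, mul_zero, sum_ite_eq', mem_univ,
    if_true]

lemma fcoef_add (f g : (J → Bool) → ℝ) (S : Finset J) :
    fcoef (fun x => f x + g x) S = fcoef f S + fcoef g S := by
  simp only [fcoef_eq_expect, add_mul, expect_add_distrib]

lemma fcoef_const_mul (c : ℝ) (f : (J → Bool) → ℝ) (S : Finset J) :
    fcoef (fun x => c * f x) S = c * fcoef f S := by
  simp only [fcoef_eq_expect, mul_expect, mul_assoc]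

lemma fcoef_walsh_singleton_mul (j : J) (f : (J → Bool) → ℝ) (S : Finset J) :
    fcoef (fun x => walsh {j} x * f x) S = fcoef f (S ∆ {j}) := by
  simp only [fcoef_eq_expect, ← walsh_mul_walsh]
  exact expect_congr rfl fun x _ => by ring

lemma fcoef_eq_zero_of_dependsOn {f : (J → Bool) → ℝ} {s : Set J} (hf : DependsOn f s)
    {S : Finset J} (hS : ¬ (S : Set J) ⊆ s) : fcoef f S = 0 := by
  obtain ⟨j, hjS, hjs⟩ := Set.not_subset.mp hS
  have h := fcoef_comp_flipAt j f S
  simp only [hf.comp_flipAt hjs, mem_coe.mp hjS, if_true] at h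
  linarith

lemma expect_walsh_singleton_mul_eq_zero {f : (J → Bool) → ℝ} {s : Set J} (hf : DependsOn f s)
    {j : J} (hj : j ∉ s) : 𝔼 x, walsh {j} x * f x = 0 := by
  simp_rw [mul_comm (walsh _ _), ← fcoef_eq_expect]
  exact fcoef_eq_zero_of_dependsOn hf (by simpa using hj)

lemma _root_.DependsOn.noiseOp {f : (J → Bool) → ℝ} {s : Set J} (hf : DependsOn f s) (ρ : ℝ) :
    DependsOn (noiseOp ρ f) s := by
  intro x y hxy
  refine sum_congr rfl fun S _ => ?_
  by_cases hS : (S : Set J) ⊆ s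
  · rw [dependsOn_walsh S fun i hi => hxy i (hS hi)]
  · simp [fcoef_eq_zero_of_dependsOn hf hS]

lemma noiseOp_const (ρ c : ℝ) : noiseOp ρ (fun _ : J → Bool => c) = fun _ => c :=
  eq_of_fcoef_eq fun S => by
    rw [fcoef_noiseOp, fcoef_const]
    split_ifs with hS <;> simp [hS]

lemma noiseOp_add (ρ : ℝ) (f g : (J → Bool) → ℝ) :
    noiseOp ρ (fun x => f x + g x) = fun x => noiseOp ρ f x + noiseOp ρ g x :=
  eq_of_fcoef_eq fun S => by simp only [fcoef_noiseOp, fcoef_add, mul_add]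

lemma noiseOp_walsh_singleton_mul {f : (J → Bool) → ℝ} {s : Set J} (hf : DependsOn f s)
    {j : J} (hj : j ∉ s) (ρ : ℝ) :
    noiseOp ρ (fun x => walsh {j} x * f x) = fun x => ρ * (walsh {j} x * noiseOp ρ f x) :=
  eq_of_fcoef_eq fun S => by
    rw [fcoef_const_mul, fcoef_noiseOp, fcoef_walsh_singleton_mul, fcoef_walsh_singleton_mul,
      fcoef_noiseOp]
    by_cases hjS : j ∈ S
    · have hcard := card_add_card_eq_card_symmDiff_add S {j}
      rw [inter_singleton_of_mem hjS, card_singleton] at hcard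
      rw [show #S = #(S ∆ {j}) + 1 by omega, pow_succ]
      ring
    · have hS : ¬ ((S ∆ {j} : Finset J) : Set J) ⊆ s := fun h =>
        hj (h (mem_coe.mpr (by simp [mem_symmDiff, hjS])))
      simp [fcoef_eq_zero_of_dependsOn hf hS]

end Noise

-- The induction step of Bonami's lemma, for `P = E u⁴`, `Q = E v⁴`, `C = E u²v²`, `p = E d²`,
-- `q = E e²` with `u = T_ρ d`, `v = T_ρ e`, and `r = ρ²`.
lemma bonami_induction_ineq {P Q C p q r : ℝ} (hP : P ≤ p ^ 2) (hQ : Q ≤ q ^ 2) (hC : C ^ 2 ≤ P * Q)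
    (hp : 0 ≤ p) (hq : 0 ≤ q) (hQ0 : 0 ≤ Q) (hr0 : 0 ≤ r) (hr : r ≤ 1 / 3) :
    P + 6 * r * C + r ^ 2 * Q ≤ (p + q) ^ 2 := by
  have hCpq : C ≤ p * q := by
    refine le_of_sq_le_sq ?_ (mul_nonneg hp hq)
    calc C ^ 2 ≤ P * Q := hC
      _ ≤ p ^ 2 * q ^ 2 := mul_le_mul hP hQ hQ0 (sq_nonneg p)
      _ = (p * q) ^ 2 := by ring
  have hpq := mul_nonneg hp hq
  have hr2 : r ^ 2 ≤ 1 := by nlinarith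
  nlinarith [mul_le_mul_of_nonneg_left hCpq hr0, mul_le_mul_of_nonneg_right hr hpq,
    mul_le_mul_of_nonneg_left hQ (sq_nonneg r), mul_le_mul_of_nonneg_right hr2 (sq_nonneg q)]

section Bonami

variable {J : Type*} [Fintype J] [DecidableEq J]

omit [Fintype J] in
lemma exists_eq_add_walsh_singleton_mul {f : (J → Bool) → ℝ} {s : Set J} {j : J}
    (hf : DependsOn f (insert j s)) :
    ∃ d e : (J → Bool) → ℝ, DependsOn d s ∧ DependsOn e s ∧
      f = fun x => d x + walsh {j} x * e x := by
  have hflip : DependsOn (fun x => f (flipAt j x)) (insert j s) := fun x y hxy =>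
    hf fun i hi => by
      rcases eq_or_ne i j with rfl | hij
      · simp [hxy i hi]
      · simp only [flipAt_apply_of_ne hij, hxy i hi]
  have hwalsh : DependsOn (walsh {j}) (insert j s) :=
    (dependsOn_walsh {j}).mono (by simp)
  refine ⟨fun x => (f x + f (flipAt j x)) / 2, fun x => walsh {j} x * rhoD j f x, ?_, ?_, ?_⟩
  · refine DependsOn.of_insert_of_comp_flipAt (j := j) (fun x y hxy => ?_) fun x => ?_
    · simp only [hf hxy, hflip hxy]
    · simp only [(flipAt_involutive j) x]
      ring
  · refine DependsOn.of_insert_of_comp_flipAt (j := j) (fun x y hxy => ?_) fun x => ?_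
    · simp only [rhoD_apply, hf hxy, hflip hxy, hwalsh hxy]
    · simp only [rhoD_apply, walsh_flipAt, (flipAt_involutive j) x, mem_singleton, if_true]
      ring
  · ext x
    have hw := walsh_mul_self {j} x
    simp only [rhoD_apply]
    linear_combination (f (flipAt j x) - f x) / 2 * hw

lemma expect_sq_add_walsh_singleton_mul {d e : (J → Bool) → ℝ} {s : Set J} {j : J}
    (hd : DependsOn d s) (he : DependsOn e s) (hj : j ∉ s) :
    𝔼 x, (d x + walsh {j} x * e x) ^ 2 = 𝔼 x, d x ^ 2 + 𝔼 x, e x ^ 2 := by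
  have hexpand : ∀ x, (d x + walsh {j} x * e x) ^ 2 =
      d x ^ 2 + e x ^ 2 + walsh {j} x * (2 * d x * e x) := fun x => by
    linear_combination e x ^ 2 * walsh_mul_self {j} x
  have hcross : DependsOn (fun x => 2 * d x * e x) s := fun x y hxy => by
    simp only [hd hxy, he hxy]
  simp_rw [hexpand, expect_add_distrib, expect_walsh_singleton_mul_eq_zero hcross hj, add_zero]

lemma expect_pow_four_add_walsh_singleton_mul {u v : (J → Bool) → ℝ} {s : Set J} {j : J}
    (hu : DependsOn u s) (hv : DependsOn v s) (hj : j ∉ s) (ρ : ℝ) :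
    𝔼 x, (u x + ρ * (walsh {j} x * v x)) ^ 4 =
      𝔼 x, u x ^ 4 + 6 * ρ ^ 2 * 𝔼 x, u x ^ 2 * v x ^ 2 + ρ ^ 4 * 𝔼 x, v x ^ 4 := by
  have hexpand : ∀ x, (u x + ρ * (walsh {j} x * v x)) ^ 4 =
      u x ^ 4 + 6 * ρ ^ 2 * (u x ^ 2 * v x ^ 2) + ρ ^ 4 * v x ^ 4 +
        walsh {j} x * (4 * ρ * u x ^ 3 * v x + 4 * ρ ^ 3 * u x * v x ^ 3) := fun x => by
    have hw := walsh_mul_self {j} x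
    linear_combination (6 * ρ ^ 2 * u x ^ 2 * v x ^ 2 + 4 * ρ ^ 3 * u x * v x ^ 3 * walsh {j} x +
      ρ ^ 4 * v x ^ 4 * (walsh {j} x * walsh {j} x + 1)) * hw
  have hodd : DependsOn (fun x => 4 * ρ * u x ^ 3 * v x + 4 * ρ ^ 3 * u x * v x ^ 3) s :=
    fun x y hxy => by simp only [hu hxy, hv hxy]
  simp_rw [hexpand, expect_add_distrib, expect_walsh_singleton_mul_eq_zero hodd hj, add_zero,
    ← mul_expect]

theorem bonami_of_dependsOn {ρ : ℝ} (hρ : ρ ^ 2 ≤ 1 / 3) (U : Finset J) {f : (J → Bool) → ℝ}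
    (hf : DependsOn f (U : Set J)) : 𝔼 x, noiseOp ρ f x ^ 4 ≤ (𝔼 x, f x ^ 2) ^ 2 := by
  induction U using Finset.induction_on generalizing f with
  | empty =>
    have hconst : f = fun _ => f fun _ => false :=
      funext fun x => (coe_empty (α := J) ▸ hf).empty x _
    rw [hconst, noiseOp_const]
    simp [← pow_mul]
  | @insert j U hj ih =>
    rw [coe_insert] at hf
    obtain ⟨d, e, hd, he, rfl⟩ := exists_eq_add_walsh_singleton_mul hf
    have hjU : j ∉ (U : Set J) := hj
    rw [noiseOp_add, noiseOp_walsh_singleton_mul he hjU,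
      expect_pow_four_add_walsh_singleton_mul (hd.noiseOp ρ) (he.noiseOp ρ) hjU,
      expect_sq_add_walsh_singleton_mul hd he hjU, show ρ ^ 4 = (ρ ^ 2) ^ 2 by ring]
    refine bonami_induction_ineq (ih hd) (ih he) ?_ (expect_nonneg fun _ _ => sq_nonneg _)
      (expect_nonneg fun _ _ => sq_nonneg _) (expect_nonneg fun _ _ => by positivity)
      (sq_nonneg ρ) hρ
    have hCS :=
      expect_mul_sq_le_sq_mul_sq univ (fun x => noiseOp ρ d x ^ 2) (fun x => noiseOp ρ e x ^ 2)
    simp_rw [← pow_mul] at hCS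
    exact hCS

theorem bonami {ρ : ℝ} (hρ : ρ ^ 2 ≤ 1 / 3) (f : (J → Bool) → ℝ) :
    𝔼 x, noiseOp ρ f x ^ 4 ≤ (𝔼 x, f x ^ 2) ^ 2 :=
  bonami_of_dependsOn hρ univ (by simpa using dependsOn_univ f)

end Bonami

section Norms

variable {J : Type*} [Fintype J] [DecidableEq J]

lemma lqNorm_one_eq (g : (J → Bool) → ℝ) : lqNorm 1 g = 𝔼 x, |g x| := by
  simp [lqNorm, hcExp_eq_expect]

lemma lqNorm_two_nonneg (g : (J → Bool) → ℝ) : 0 ≤ lqNorm 2 g :=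
  Real.rpow_nonneg (by rw [hcExp_eq_expect]; exact expect_nonneg fun _ _ => by positivity) _

lemma sq_lqNorm_two (g : (J → Bool) → ℝ) : lqNorm 2 g ^ 2 = 𝔼 x, g x ^ 2 := by
  have h0 : 0 ≤ 𝔼 x, g x ^ 2 := expect_nonneg fun _ _ => sq_nonneg _
  simp only [lqNorm, hcExp_eq_expect, Real.rpow_two, sq_abs]
  rw [← Real.rpow_natCast, ← Real.rpow_mul h0]
  norm_num

lemma lqNorm_one_le_lqNorm_two (g : (J → Bool) → ℝ) : lqNorm 1 g ≤ lqNorm 2 g := by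
  refine le_of_sq_le_sq ?_ (lqNorm_two_nonneg g)
  simpa [lqNorm_one_eq, sq_lqNorm_two] using
    expect_mul_sq_le_sq_mul_sq univ (fun x => |g x|) fun _ => 1

lemma lqNorm_one_pos {g : (J → Bool) → ℝ} (hg : g ≠ 0) : 0 < lqNorm 1 g := by
  obtain ⟨x, hx⟩ := Function.ne_iff.mp hg
  rw [lqNorm_one_eq]
  exact expect_pos' (fun _ _ => abs_nonneg _) ⟨x, mem_univ x, abs_pos.mpr hx⟩

end Norms

section Hypercontractivity

variable {J : Type*} [Fintype J] [DecidableEq J]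

theorem sum_inv_three_pow_mul_fcoef_sq_le (g : (J → Bool) → ℝ) :
    ∑ S, 3⁻¹ ^ #S * fcoef g S ^ 2 ≤ lqNorm 1 g * lqNorm 2 g := by
  -- With `u = T_ρ (T_ρ g)` the sum is `X = E g u`, Bonami bounds `E u⁴` by `X²`, and two
  -- Cauchy–Schwarz steps give `X⁴ ≤ ‖g‖₁² ‖g‖₂² X²`.
  set ρ := √(3⁻¹ : ℝ)
  have hρ : ρ ^ 2 = 3⁻¹ := Real.sq_sqrt (by norm_num)
  set X := ∑ S, (3 : ℝ)⁻¹ ^ #S * fcoef g S ^ 2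
  set u := noiseOp ρ (noiseOp ρ g)
  have hweight : ∀ S : Finset J, (3 : ℝ)⁻¹ ^ #S = ρ ^ #S * ρ ^ #S := fun S => by
    rw [← mul_pow, ← sq, hρ]
  have hX_sq : 𝔼 x, noiseOp ρ g x ^ 2 = X := by
    simp_rw [expect_sq_eq_sum_fcoef_sq, fcoef_noiseOp]
    exact sum_congr rfl fun S _ => by rw [hweight]; ring
  have hX_mul : 𝔼 x, g x * u x = X := by
    simp_rw [u, expect_mul_eq_sum_fcoef_mul, fcoef_noiseOp]
    exact sum_congr rfl fun S _ => by rw [hweight]; ring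
  have hu4 : 𝔼 x, u x ^ 4 ≤ X ^ 2 := hX_sq ▸ bonami (by rw [hρ]; norm_num) _
  have hX0 : 0 ≤ X := sum_nonneg fun S _ => by positivity
  have hN1 : 0 ≤ 𝔼 x, |g x| := expect_nonneg fun _ _ => abs_nonneg _
  have hCS₁ : (𝔼 x, |g x| * |u x|) ^ 2 ≤ (𝔼 x, |g x|) * 𝔼 x, |g x| * u x ^ 2 := by
    have h := expect_mul_sq_le_sq_mul_sq univ (fun x => √|g x|) fun x => √|g x| * |u x|
    simp_rw [← mul_assoc, Real.mul_self_sqrt (abs_nonneg _), mul_pow,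
      Real.sq_sqrt (abs_nonneg _), sq_abs] at h
    exact h
  have hCS₂ : (𝔼 x, |g x| * u x ^ 2) ^ 2 ≤ lqNorm 2 g ^ 2 * 𝔼 x, u x ^ 4 := by
    have h := expect_mul_sq_le_sq_mul_sq univ (fun x => |g x|) fun x => u x ^ 2
    simp_rw [sq_abs, ← pow_mul] at h
    rwa [sq_lqNorm_two]
  have hXY : X ≤ 𝔼 x, |g x| * |u x| :=
    hX_mul ▸ expect_le_expect fun x _ => (le_abs_self _).trans (abs_mul _ _).le
  have hX4 : X ^ 4 ≤ (lqNorm 1 g * lqNorm 2 g) ^ 2 * X ^ 2 := by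
    rw [lqNorm_one_eq]
    calc X ^ 4 ≤ ((𝔼 x, |g x| * |u x|) ^ 2) ^ 2 := by
          rw [← pow_mul]; exact pow_le_pow_left₀ hX0 hXY 4
      _ ≤ ((𝔼 x, |g x|) * 𝔼 x, |g x| * u x ^ 2) ^ 2 :=
          pow_le_pow_left₀ (sq_nonneg _) hCS₁ 2
      _ = (𝔼 x, |g x|) ^ 2 * (𝔼 x, |g x| * u x ^ 2) ^ 2 := mul_pow _ _ _
      _ ≤ (𝔼 x, |g x|) ^ 2 * (lqNorm 2 g ^ 2 * X ^ 2) :=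
          mul_le_mul_of_nonneg_left (hCS₂.trans (by gcongr)) (sq_nonneg _)
      _ = _ := by ring
  have hN : 0 ≤ lqNorm 1 g * lqNorm 2 g :=
    mul_nonneg (lqNorm_one_eq g ▸ hN1) (lqNorm_two_nonneg g)
  rcases hX0.eq_or_lt with hX | hX
  · exact hX ▸ hN
  · exact le_of_sq_le_sq (by nlinarith [pow_pos hX 2]) hN

end Hypercontractivity

section Numerics

open Real

lemma one_div_le_three_pow_div_mul_add {K k : ℕ} (hK : 0 < K) (hk : 0 < k) :
    (1 : ℝ) / k ≤ 3 ^ K / K * 3⁻¹ ^ k + 1 / (K + 1) := by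
  rcases le_or_gt k K with hkK | hKk
  · obtain ⟨m, rfl⟩ := Nat.exists_eq_add_of_le hkK
    have hbern : (1 : ℝ) + m ≤ 3 ^ m := by
      have := one_add_mul_le_pow (by norm_num : (-2 : ℝ) ≤ 2) m
      norm_num at this
      linarith
    have hk1 : (1 : ℝ) ≤ k := by exact_mod_cast hk
    have hmain : (1 : ℝ) / k ≤ 3 ^ (k + m) / (k + m : ℕ) * 3⁻¹ ^ k := by
      rw [show (3 : ℝ) ^ (k + m) / (k + m : ℕ) * 3⁻¹ ^ k = 3 ^ m / (k + m : ℕ) by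
        rw [pow_add, inv_pow]; field_simp]
      rw [div_le_div_iff₀ (by positivity) (by positivity)]
      push_cast
      nlinarith
    have : (0 : ℝ) ≤ 1 / (k + m + 1 : ℕ) := by positivity
    push_cast at hmain this ⊢
    linarith
  · have h1 : (1 : ℝ) / k ≤ 1 / (K + 1) :=
      one_div_le_one_div_of_le (by positivity) (by exact_mod_cast hKk)
    have h2 : (0 : ℝ) ≤ 3 ^ K / K * 3⁻¹ ^ k := by positivity
    linarith

lemma pow_le_exp_natCast (n : ℕ) : (2.7182818 : ℝ) ^ n ≤ exp n := by
  rw [← exp_one_pow]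
  exact pow_le_pow_left₀ (by norm_num) (by linarith [exp_one_gt_d9]) n

lemma exp_neg_le_inv {a c : ℝ} (ha : 0 < a) (h : a ≤ exp c) : exp (-c) ≤ a⁻¹ := by
  rw [exp_neg]
  exact inv_anti₀ ha h

lemma mul_exp_neg_le_of_one_le {a L : ℝ} (ha : 1 ≤ a) (haL : a ≤ L) :
    L * exp (-L) ≤ a * exp (-a) := by
  have h : L ≤ a * exp (L - a) := by nlinarith [add_one_le_exp (L - a)]
  calc L * exp (-L) ≤ a * exp (L - a) * exp (-L) := by gcongr
    _ = a * exp (-a) := by rw [mul_assoc, ← exp_add]; ring_nf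

/- Splitting at level `K` bounds `∑_S \hat g(S)² / |S|` by `c ‖g‖₂²` with
`c = (3^K/K) e^{-L} + 1/(K+1)`; the lemmas below find, for each `L > 0`, a split whose
coefficient satisfies `c L + 3 e^{-6L/5} ≤ 3`. -/

lemma add_three_mul_exp_le_three {L : ℝ} (hL : 0 < L) (hL' : L ≤ 13 / 6) :
    L + 3 * exp (-(6 / 5) * L) ≤ 3 := by
  have h := add_one_le_exp ((6 / 5) * L)
  have hprod : exp (-(6 / 5) * L) * exp ((6 / 5) * L) = 1 := by
    rw [← exp_add]; norm_num
  nlinarith [exp_pos (-(6 / 5) * L), mul_pos hL (exp_pos (-(6 / 5) * L))]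

lemma coeff_two_mul_add_le_three_of_le_of_le {L b : ℝ} (n : ℕ) (hn : 1 ≤ n) (hnL : n ≤ L)
    (hLb : L ≤ b) (hnb : (9 / 2 * n + 3) / 2.7182818 ^ n + b / 3 ≤ 3) :
    (9 / 2 * exp (-L) + 1 / 3) * L + 3 * exp (-(6 / 5) * L) ≤ 3 := by
  have hE : 0 < (2.7182818 : ℝ) ^ n := by positivity
  have hexp : exp (-(n : ℝ)) ≤ ((2.7182818 : ℝ) ^ n)⁻¹ :=
    exp_neg_le_inv hE (pow_le_exp_natCast n)
  have h1 : L * exp (-L) ≤ n * exp (-(n : ℝ)) :=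
    mul_exp_neg_le_of_one_le (by exact_mod_cast hn) hnL
  have h2 : exp (-(6 / 5) * L) ≤ exp (-(n : ℝ)) := exp_le_exp.mpr (by linarith)
  have h3 : (n : ℝ) * exp (-(n : ℝ)) ≤ n * ((2.7182818 : ℝ) ^ n)⁻¹ := by gcongr
  have h4 : (9 / 2 * n + 3) / 2.7182818 ^ n = 9 / 2 * (n * ((2.7182818 : ℝ) ^ n)⁻¹) +
      3 * ((2.7182818 : ℝ) ^ n)⁻¹ := by
    field_simp
  nlinarith

lemma coeff_two_mul_add_le_three {L : ℝ} (hL : 2 ≤ L) (hL' : L ≤ 7) :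
    (9 / 2 * exp (-L) + 1 / 3) * L + 3 * exp (-(6 / 5) * L) ≤ 3 := by
  rcases le_total L 3 with h3 | h3
  · exact coeff_two_mul_add_le_three_of_le_of_le 2 (by norm_num) (by norm_num; linarith) h3
      (by norm_num)
  rcases le_total L 4 with h4 | h4
  · exact coeff_two_mul_add_le_three_of_le_of_le 3 (by norm_num) (by norm_num; linarith) h4
      (by norm_num)
  · exact coeff_two_mul_add_le_three_of_le_of_le 4 (by norm_num) (by norm_num; linarith) hL'
      (by norm_num)

lemma exists_coeff_mul_add_le_three {L : ℝ} (hL : 7 ≤ L) :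
    ∃ K : ℕ, 0 < K ∧
      ((3 : ℝ) ^ K / K * exp (-L) + 1 / (K + 1)) * L + 3 * exp (-(6 / 5) * L) ≤ 3 := by
  set K := ⌈L / 2⌉₊
  have hLK : L / 2 ≤ K := Nat.le_ceil _
  have hKL : (K : ℝ) < L / 2 + 1 := Nat.ceil_lt_add_one (by linarith)
  have hK : 4 ≤ K := by
    have : (3 : ℝ) < K := by linarith
    exact_mod_cast this
  refine ⟨K, by omega, ?_⟩
  have hK0 : (0 : ℝ) < K := by positivity
  have he2 := pow_le_exp_natCast 2
  have he6 := pow_le_exp_natCast 6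
  norm_num at he2 he6
  -- with `r = 3 e⁻²`, the first term is at most `2 e² r^K ≤ 2 e² r⁴ = 162 e⁻⁶`
  set r := 3 * exp (-2)
  have hr0 : 0 ≤ r := by positivity
  have hr1 : r ≤ 1 := by
    have := exp_neg_le_inv (by norm_num) he2
    simp only [r]
    linarith
  have hpow : (3 : ℝ) ^ K * exp (2 - 2 * K) = exp 2 * r ^ K := by
    rw [mul_pow, ← exp_nat_mul, sub_eq_add_neg, exp_add]
    ring_nf
  have hr4 : exp 2 * r ^ 4 = 81 * exp (-6) := by
    rw [mul_pow, ← exp_nat_mul, ← mul_assoc, mul_comm (exp 2), mul_assoc, ← exp_add]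
    norm_num
  have hterm1 : (3 : ℝ) ^ K / K * exp (-L) * L ≤ 162 * exp (-6) := by
    calc (3 : ℝ) ^ K / K * exp (-L) * L ≤ 3 ^ K / K * exp (2 - 2 * K) * (2 * K) := by
          gcongr <;> linarith
      _ = 2 * (exp 2 * r ^ K) := by rw [← hpow]; field_simp
      _ ≤ 2 * (exp 2 * r ^ 4) := by
          gcongr 2 * (exp 2 * ?_)
          exact pow_le_pow_of_le_one hr0 hr1 hK
      _ = 162 * exp (-6) := by rw [hr4]; ring
  have hterm2 : L / (K + 1) ≤ 2 := by
    rw [div_le_iff₀ (by positivity)]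
    linarith
  have hterm3 : exp (-(6 / 5) * L) ≤ exp (-6) := exp_le_exp.mpr (by linarith)
  have he6' := exp_neg_le_inv (by norm_num) he6
  calc ((3 : ℝ) ^ K / K * exp (-L) + 1 / (K + 1)) * L + 3 * exp (-(6 / 5) * L)
      = 3 ^ K / K * exp (-L) * L + L / (K + 1) + 3 * exp (-(6 / 5) * L) := by ring
    _ ≤ 3 := by nlinarith

lemma mul_le_three_mul_of_coeff_bounds {A X M L : ℝ} (hM : 0 ≤ M) (hL : 0 < L) (hAM : A ≤ M)
    (hAK : ∀ K : ℕ, 0 < K → A ≤ 3 ^ K / K * X + 1 / (K + 1) * M) (hX : X ≤ exp (-L) * M) :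
    A * L ≤ 3 * (M * (1 - exp (-(6 / 5) * L))) := by
  have hAK' : ∀ K : ℕ, 0 < K → A ≤ (3 ^ K / K * exp (-L) + 1 / (K + 1)) * M := fun K hK => by
    have := mul_le_mul_of_nonneg_left hX (by positivity : (0 : ℝ) ≤ 3 ^ K / K)
    linarith [hAK K hK]
  obtain ⟨c, hAc, hc⟩ : ∃ c, A ≤ c * M ∧ c * L + 3 * exp (-(6 / 5) * L) ≤ 3 := by
    rcases le_total L (13 / 6) with h1 | h1
    · exact ⟨1, by linarith, by linarith [add_three_mul_exp_le_three hL h1]⟩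
    rcases le_total L 7 with h2 | h2
    · refine ⟨_, hAK' 2 two_pos, ?_⟩
      have := coeff_two_mul_add_le_three (by linarith) h2
      norm_num at this ⊢
      linarith
    · obtain ⟨K, hK, hbound⟩ := exists_coeff_mul_add_le_three h2
      exact ⟨_, hAK' K hK, hbound⟩
  nlinarith [mul_le_mul_of_nonneg_right hAc hL.le]

end Numerics

section Tail

variable {J : Type*} [Fintype J] [DecidableEq J]

lemma sum_fcoef_sq_div_card_le_sum (g : (J → Bool) → ℝ) :
    ∑ S, fcoef g S ^ 2 / #S ≤ ∑ S, fcoef g S ^ 2 := by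
  refine sum_le_sum fun S _ => ?_
  rcases (#S).eq_zero_or_pos with hS | hS
  · simpa [hS] using sq_nonneg (fcoef g S)
  · exact div_le_self (sq_nonneg _) (by exact_mod_cast hS)

lemma sum_fcoef_sq_div_card_le (g : (J → Bool) → ℝ) {K : ℕ} (hK : 0 < K) :
    ∑ S, fcoef g S ^ 2 / #S ≤
      3 ^ K / K * ∑ S, 3⁻¹ ^ #S * fcoef g S ^ 2 + 1 / (K + 1) * ∑ S, fcoef g S ^ 2 := by
  rw [mul_sum, mul_sum, ← sum_add_distrib]
  refine sum_le_sum fun S _ => ?_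
  rcases (#S).eq_zero_or_pos with hS | hS
  · simp only [hS, CharP.cast_eq_zero, div_zero]
    positivity
  · calc fcoef g S ^ 2 / #S = 1 / #S * fcoef g S ^ 2 := by ring
      _ ≤ (3 ^ K / K * 3⁻¹ ^ #S + 1 / (K + 1)) * fcoef g S ^ 2 := by
          gcongr
          exact one_div_le_three_pow_div_mul_add hK hS
      _ = _ := by ring

open Real in
open scoped Classical in
theorem sum_fcoef_sq_div_card_le_log (g : (J → Bool) → ℝ) :
    ∑ S, fcoef g S ^ 2 / #S ≤ 3 *
      if g = 0 then 0
      else if lqNorm 1 g = lqNorm 2 g then (6 / 5) * lqNorm 2 g ^ 2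
      else lqNorm 2 g ^ 2 * (1 - (lqNorm 1 g / lqNorm 2 g) ^ ((6 : ℝ) / 5)) /
        log (lqNorm 2 g / lqNorm 1 g) := by
  have hM : ∑ S, fcoef g S ^ 2 = lqNorm 2 g ^ 2 := by
    rw [sq_lqNorm_two, expect_sq_eq_sum_fcoef_sq]
  have hAM := sum_fcoef_sq_div_card_le_sum g
  split_ifs with hg h12
  · simp [hg, fcoef_eq_expect]
  · rw [← hM]
    nlinarith [sum_nonneg fun S (_ : S ∈ univ) => sq_nonneg (fcoef g S)]
  have hN1 := lqNorm_one_pos hg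
  have hN12 := lt_of_le_of_ne (lqNorm_one_le_lqNorm_two g) h12
  set L := log (lqNorm 2 g / lqNorm 1 g)
  have hL : 0 < L := log_pos ((one_lt_div hN1).mpr hN12)
  have hratio : lqNorm 1 g / lqNorm 2 g = exp (-L) := by
    rw [exp_neg, exp_log (div_pos (hN1.trans hN12) hN1), inv_div]
  have hX : ∑ S, 3⁻¹ ^ #S * fcoef g S ^ 2 ≤ exp (-L) * lqNorm 2 g ^ 2 := by
    calc _ ≤ lqNorm 1 g * lqNorm 2 g := sum_inv_three_pow_mul_fcoef_sq_le g
      _ = lqNorm 1 g / lqNorm 2 g * lqNorm 2 g ^ 2 := by field_simp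
      _ = _ := by rw [hratio]
  rw [hratio, ← exp_mul, show -L * (6 / 5 : ℝ) = -(6 / 5) * L by ring, mul_div_assoc',
    le_div_iff₀ hL]
  rw [hM] at hAM
  exact mul_le_three_mul_of_coeff_bounds (sq_nonneg _) hL hAM
    (fun K hK => hM ▸ sum_fcoef_sq_div_card_le g hK) hX

end Tail

end BooleanCube

open BooleanCube

open scoped Classical in
/-- sharpened form:
`Var(f) ≤ 3 Σ_j ‖f_j‖₂² (1 - (‖f_j‖₁/‖f_j‖₂)^{6/5}) / log(‖f_j‖₂/‖f_j‖₁)`,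
the `j`-th summand interpreted as `(6/5)‖f_j‖₂²` when `‖f_j‖₁ = ‖f_j‖₂`, and as `0`
when `f_j ≡ 0`. -/
theorem stmt9 {J : Type*} [Fintype J] [DecidableEq J] (f : (J → Bool) → ℝ) :
    hcVar f ≤ 3 * ∑ j : J,
      if rhoD j f = 0 then 0
      else if lqNorm 1 (rhoD j f) = lqNorm 2 (rhoD j f) then
        (6 / 5) * lqNorm 2 (rhoD j f) ^ 2
      else
        lqNorm 2 (rhoD j f) ^ 2 *
          (1 - (lqNorm 1 (rhoD j f) / lqNorm 2 (rhoD j f)) ^ ((6 : ℝ) / 5)) /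
          Real.log (lqNorm 2 (rhoD j f) / lqNorm 1 (rhoD j f)) := by
  rw [hcVar_eq_sum_rhoD, mul_sum]
  exact sum_le_sum fun j _ => sum_fcoef_sq_div_card_le_log (rhoD j f)
end
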